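/- arXiv:2410.17503 — 2 statements merged into one kernel-verified Lean document; each statement's English description precedes it below -/
import Mathlib

section
/- Fix a nonempty finite action set A. For every ε > 0 there exists N such that for every finite state set Ω with |Ω| ≥ N and every interior prior μ₀ on Ω, the share of environments (u_S, u_R) that are felicitous lies within ε of 1/|A|^{|A|}. -/
/-!
Off a null set of ties, Sender's utility `u_S` has a unique ideal action in every state, which
labels the states by some `s : Ω → A`; then `idealStates u_S a = s⁻¹ a`, and felicity asks that
each `a` maximise Receiver's prior-weighted payoff over `s⁻¹ a`. These conditions involve
disjoint blocks of Receiver's independent uniform coordinates, and by the symmetry between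
actions each holds with probability `1/|A|`. So felicity has conditional probability exactly
`1/|A|^|A|` when `s` is onto, while `s` misses some action with probability at most
`|A| (1 - 1/|A|)^|Ω|`, which tends to `0`.
-/

open MeasureTheory

namespace KL

/-- `f` is a probability distribution on the finite type `X`. -/
def IsDist {X : Type} [Fintype X] (f : X → ℝ) : Prop :=
  (∀ x, 0 ≤ f x) ∧ ∑ x, f x = 1

/-- `μ₀` is an interior prior on `Ω`. -/
def IsPrior {Ω : Type} [Fintype Ω] (μ₀ : Ω → ℝ) : Prop :=
  (∀ ω, 0 < μ₀ ω) ∧ ∑ ω, μ₀ ω = 1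

variable {Ω A M : Type} [Fintype Ω] [Fintype A] [Fintype M]

/-- A messaging strategy: a distribution over messages in each state. -/
def IsMsg (σ : Ω → M → ℝ) : Prop := ∀ ω, IsDist (σ ω)

/-- An action strategy: a distribution over actions after each message. -/
def IsAct (ρ : M → A → ℝ) : Prop := ∀ m, IsDist (ρ m)

/-- Expected payoff of a profile `(σ, ρ)` for utility `u`. -/
def U (μ₀ : Ω → ℝ) (u : A × Ω → ℝ) (σ : Ω → M → ℝ) (ρ : M → A → ℝ) : ℝ :=
  ∑ ω, ∑ m, ∑ a, μ₀ ω * σ ω m * ρ m a * u (a, ω)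

/-- Sender best response. -/
def SBR (μ₀ : Ω → ℝ) (uS : A × Ω → ℝ) (σ : Ω → M → ℝ) (ρ : M → A → ℝ) : Prop :=
  ∀ σ' : Ω → M → ℝ, IsMsg σ' → U μ₀ uS σ' ρ ≤ U μ₀ uS σ ρ

/-- Receiver best response. -/
def RBR (μ₀ : Ω → ℝ) (uR : A × Ω → ℝ) (σ : Ω → M → ℝ) (ρ : M → A → ℝ) : Prop :=
  ∀ ρ' : M → A → ℝ, IsAct ρ' → U μ₀ uR σ ρ' ≤ U μ₀ uR σ ρ

/-- A cheap-talk equilibrium: a profile of valid strategies that is S-BR and R-BR. -/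
def CTEq (μ₀ : Ω → ℝ) (uS uR : A × Ω → ℝ) (σ : Ω → M → ℝ) (ρ : M → A → ℝ) : Prop :=
  IsMsg σ ∧ IsAct ρ ∧ SBR μ₀ uS σ ρ ∧ RBR μ₀ uR σ ρ

/-- A persuasion profile: a profile of valid strategies that is R-BR. -/
def PersProfile (μ₀ : Ω → ℝ) (uR : A × Ω → ℝ) (σ : Ω → M → ℝ) (ρ : M → A → ℝ) : Prop :=
  IsMsg σ ∧ IsAct ρ ∧ RBR μ₀ uR σ ρ

/-- The cheap-talk payoff: the maximal Sender payoff over cheap-talk equilibria. -/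
noncomputable def ctPayoff (μ₀ : Ω → ℝ) (uS uR : A × Ω → ℝ) : ℝ :=
  sSup {x | ∃ (σ : Ω → M → ℝ) (ρ : M → A → ℝ), CTEq μ₀ uS uR σ ρ ∧ x = U μ₀ uS σ ρ}

/-- The (Bayesian) persuasion payoff: the maximal Sender payoff over persuasion profiles. -/
noncomputable def persPayoff (μ₀ : Ω → ℝ) (uS uR : A × Ω → ℝ) : ℝ :=
  sSup {x | ∃ (σ : Ω → M → ℝ) (ρ : M → A → ℝ), PersProfile μ₀ uR σ ρ ∧ x = U μ₀ uS σ ρ}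

/-- A messaging strategy is partitional if it is deterministic in every state. -/
def Partitional (σ : Ω → M → ℝ) : Prop := ∀ ω, ∃ m, σ ω m = 1

/-- The partitional persuasion payoff. -/
noncomputable def partPersPayoff (μ₀ : Ω → ℝ) (uS uR : A × Ω → ℝ) : ℝ :=
  sSup {x | ∃ (σ : Ω → M → ℝ) (ρ : M → A → ℝ),
    Partitional σ ∧ PersProfile μ₀ uR σ ρ ∧ x = U μ₀ uS σ ρ}

/-- The partitional cheap-talk payoff. -/
noncomputable def partCtPayoff (μ₀ : Ω → ℝ) (uS uR : A × Ω → ℝ) : ℝ :=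
  sSup {x | ∃ (σ : Ω → M → ℝ) (ρ : M → A → ℝ),
    Partitional σ ∧ CTEq μ₀ uS uR σ ρ ∧ x = U μ₀ uS σ ρ}

/-- A message is on-path if it is sent with positive probability in some state. -/
def OnPath (σ : Ω → M → ℝ) (m : M) : Prop := ∃ ω, 0 < σ ω m

/-- A pure action strategy: degenerate after every message. -/
def IsPureAct (ρ : M → A → ℝ) : Prop := ∀ m, ∃ a, ρ m a = 1

/-- A pure-on-path action strategy: degenerate after every on-path message. -/
def PureOnPath (σ : Ω → M → ℝ) (ρ : M → A → ℝ) : Prop :=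
  ∀ m, OnPath σ m → ∃ a, ρ m a = 1

/-- The posterior belief induced by message `m`. -/
noncomputable def post (μ₀ : Ω → ℝ) (σ : Ω → M → ℝ) (m : M) (ω : Ω) : ℝ :=
  μ₀ ω * σ ω m / ∑ ω', μ₀ ω' * σ ω' m

/-- The cube of environments `[0,1]^(2|A||Ω|)`. -/
def EnvCube (Ω A : Type) : Set ((A × Ω → ℝ) × (A × Ω → ℝ)) :=
  {e | (∀ p, e.1 p ∈ Set.Icc (0 : ℝ) 1) ∧ ∀ p, e.2 p ∈ Set.Icc (0 : ℝ) 1}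

/-- The cube of transparent environments `[0,1]^(|A|(|Ω|+1))`, points `(v, u_R)`. -/
def TransCube (Ω A : Type) : Set ((A → ℝ) × (A × Ω → ℝ)) :=
  {e | (∀ a, e.1 a ∈ Set.Icc (0 : ℝ) 1) ∧ ∀ p, e.2 p ∈ Set.Icc (0 : ℝ) 1}

open Classical in
/-- The expanded-indifference matrix `T^i`: rows `u_S(a_j,·) − u_S(a_i,·)` for `j ≠ i`,
rows `u_R(a_j,·) − u_R(a_i,·)` for `j ≠ i`, and the rows of the identity matrix. -/
noncomputable def TMat (uS uR : A × Ω → ℝ) (i : A) :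
    Matrix (({j : A // j ≠ i} ⊕ {j : A // j ≠ i}) ⊕ Ω) Ω ℝ :=
  Matrix.of fun r ω =>
    match r with
    | Sum.inl (Sum.inl j) => uS (j.1, ω) - uS (i, ω)
    | Sum.inl (Sum.inr j) => uR (j.1, ω) - uR (i, ω)
    | Sum.inr ω' => if ω' = ω then 1 else 0

/-- Scant indifferences: every row-submatrix of every expanded-indifference matrix has
full rank (rank equal to the minimum of the number of rows and the number of columns). -/
def ScantIndiff (uS uR : A × Ω → ℝ) : Prop :=
  ∀ i : A, ∀ s : Finset (({j : A // j ≠ i} ⊕ {j : A // j ≠ i}) ⊕ Ω),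
    ((TMat uS uR i).submatrix (fun r : {x // x ∈ s} => r.1) id).rank
      = min s.card (Fintype.card Ω)

open Classical in
/-- The set `Ω_a` of states in which `a` is an ideal action for Sender. -/
noncomputable def idealStates (uS : A × Ω → ℝ) (a : A) : Finset Ω :=
  Finset.univ.filter fun ω => ∀ b, uS (b, ω) ≤ uS (a, ω)

/-- Felicitous environment. -/
def Felicitous (μ₀ : Ω → ℝ) (uS uR : A × Ω → ℝ) : Prop :=
  ∀ a a' : A, 0 ≤ ∑ ω ∈ idealStates uS a, μ₀ ω * (uR (a, ω) - uR (a', ω))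

/-- Partitional-unique-response: for every nonempty subset of states, Receiver's
expected payoff has a unique maximizer. -/
def PUR (μ₀ : Ω → ℝ) (uR : A × Ω → ℝ) : Prop :=
  ∀ S : Finset Ω, S.Nonempty →
    ∃! a : A, ∀ b : A, ∑ ω ∈ S, μ₀ ω * uR (b, ω) ≤ ∑ ω ∈ S, μ₀ ω * uR (a, ω)

/-- Jointly-inclusive environment: each action is the unique ideal action of both
players in some state. -/
def JointlyInclusive (uS uR : A × Ω → ℝ) : Prop :=
  ∀ a : A, ∃ ω : Ω,
    (∀ b, b ≠ a → uS (b, ω) < uS (a, ω)) ∧ ∀ b, b ≠ a → uR (b, ω) < uR (a, ω)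

end KL

namespace KL

open Set Filter Topology
open scoped ENNReal

section UnitCube

variable {ι : Type}

def unitCube (ι : Type) : Set (ι → ℝ) := univ.pi fun _ => Icc 0 1

lemma mem_unitCube {x : ι → ℝ} : x ∈ unitCube ι ↔ ∀ i, x i ∈ Icc (0 : ℝ) 1 := mem_univ_pi

lemma measurableSet_unitCube [Fintype ι] : MeasurableSet (unitCube ι) :=
  MeasurableSet.univ_pi fun _ => measurableSet_Icc

lemma volume_unitCube [Fintype ι] : volume (unitCube ι) = 1 := by
  rw [unitCube, volume_pi_pi]
  simp

lemma volume_ne_top_of_subset_unitCube [Fintype ι] {S : Set (ι → ℝ)} (h : S ⊆ unitCube ι) :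
    volume S ≠ ∞ :=
  ne_top_of_le_ne_top (by simp [volume_unitCube]) (measure_mono h)

lemma preimage_unitCube_comp_equiv {ι' : Type} (e : ι ≃ ι') :
    (fun x : ι' → ℝ => x ∘ e) ⁻¹' unitCube ι = unitCube ι' := by
  ext x
  simp only [mem_preimage, mem_unitCube, Function.comp_apply]
  exact e.forall_congr_right (q := fun i => x i ∈ Icc 0 1)

lemma measurePreserving_comp_equiv [Fintype ι] {ι' : Type} [Fintype ι'] (e : ι ≃ ι') :
    MeasurePreserving (fun x : ι' → ℝ => x ∘ e) volume volume :=
  volume_preserving_arrowCongr' e.symm (MeasurableEquiv.refl ℝ) (.id _)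

lemma measurePreserving_sigmaUncurry {κ : Type} [Fintype κ] (β : κ → Type)
    [∀ k, Fintype (β k)] :
    MeasurePreserving (MeasurableEquiv.piCurry fun k (_ : β k) => ℝ).symm volume volume := by
  refine ⟨measurable_sigmaUncurry, (Measure.pi_eq fun s hs => ?_).symm⟩
  have hpre : Sigma.uncurry ⁻¹' univ.pi s = univ.pi fun k => univ.pi fun j => s ⟨k, j⟩ := by
    ext x
    simp [Sigma.uncurry, Sigma.forall]
  rw [MeasurableEquiv.map_apply, MeasurableEquiv.coe_piCurry_symm, hpre, volume_pi_pi]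
  simp_rw [volume_pi_pi]
  rw [← Finset.univ_sigma_univ, Finset.prod_sigma]

lemma volume_iInter_blocks [Fintype ι] {κ : Type} [Fintype κ] (β : κ → Type) [∀ k, Fintype (β k)]
    (e : (Σ k, β k) ≃ ι) {F : ∀ k, Set (β k → ℝ)} (hF : ∀ k, MeasurableSet (F k)) :
    volume (⋂ k, {x : ι → ℝ | (fun j => x (e ⟨k, j⟩)) ∈ F k}) = ∏ k, volume (F k) := by
  have hcurry := (measurePreserving_sigmaUncurry β).symm.comp (measurePreserving_comp_equiv e)
  rw [MeasurableEquiv.symm_symm] at hcurry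
  have hset : ⋂ k, {x : ι → ℝ | (fun j => x (e ⟨k, j⟩)) ∈ F k}
      = ((MeasurableEquiv.piCurry fun k (_ : β k) => ℝ) ∘ fun x : ι → ℝ => x ∘ e) ⁻¹'
          univ.pi F := by
    ext x
    simp only [mem_iInter, mem_ofPred_eq, mem_preimage, mem_univ_pi]
    rfl
  rw [hset, hcurry.measure_preimage (MeasurableSet.univ_pi hF).nullMeasurableSet, volume_pi_pi]

end UnitCube

section Argmax

variable {α ι : Type} [Fintype ι]

def weightedSum (w : ι → ℝ) (c : α) : (α × ι → ℝ) →ₗ[ℝ] ℝ :=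
  ∑ i, w i • LinearMap.proj (c, i)

lemma weightedSum_apply (w : ι → ℝ) (c : α) (v : α × ι → ℝ) :
    weightedSum w c v = ∑ i, w i * v (c, i) := by
  simp [weightedSum]

def argmaxSet (w : ι → ℝ) (b : α) : Set (α × ι → ℝ) :=
  unitCube (α × ι) ∩ {v | ∀ c, weightedSum w c v ≤ weightedSum w b v}

lemma measurableSet_argmaxSet [Fintype α] (w : ι → ℝ) (b : α) : MeasurableSet (argmaxSet w b) :=
  measurableSet_unitCube.inter (Measurable.setOf (by fun_prop))

lemma volume_setOf_weightedSum_eq [Fintype α] {w : ι → ℝ} (hw : w ≠ 0) {c d : α} (hcd : c ≠ d) :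
    volume {v | weightedSum w c v = weightedSum w d v} = 0 := by
  classical
  obtain ⟨i, hi⟩ := Function.ne_iff.1 hw
  have hker : {v | weightedSum w c v = weightedSum w d v}
      = LinearMap.ker (weightedSum w c - weightedSum w d) := by
    ext v
    simp [sub_eq_zero]
  rw [hker]
  refine Measure.addHaar_submodule _ _ fun htop => hi ?_
  have hmem : Pi.single (c, i) 1 ∈ LinearMap.ker (weightedSum w c - weightedSum w d) :=
    htop ▸ Submodule.mem_top
  simpa [weightedSum_apply, Pi.single_apply, hcd.symm] using hmem

lemma preimage_argmaxSet_comp_prodCongr (w : ι → ℝ) (σ : Equiv.Perm α) (b : α) :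
    (fun v : α × ι → ℝ => v ∘ σ.prodCongr (Equiv.refl ι)) ⁻¹' argmaxSet w b
      = argmaxSet w (σ b) := by
  rw [argmaxSet, argmaxSet, preimage_inter, preimage_unitCube_comp_equiv]
  ext v
  simp only [mem_inter_iff, mem_preimage, mem_ofPred_eq, weightedSum_apply, Function.comp_apply,
    Equiv.prodCongr_apply, Prod.map, Equiv.refl_apply]
  exact and_congr_right fun _ =>
    σ.forall_congr_right (q := fun c => ∑ i, w i * v (c, i) ≤ ∑ i, w i * v (σ b, i))

lemma volume_argmaxSet [Fintype α] [Nonempty α] {w : ι → ℝ} (hw : w ≠ 0) (b : α) :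
    volume (argmaxSet w b) = (Fintype.card α : ℝ≥0∞)⁻¹ := by
  classical
  -- the maximiser is almost surely unique and, by symmetry, equally likely to be any `c`
  have hsymm (c : α) : volume (argmaxSet w c) = volume (argmaxSet w b) := by
    let e := (Equiv.swap c b).prodCongr (Equiv.refl ι)
    rw [← (measurePreserving_comp_equiv e).measure_preimage
      (measurableSet_argmaxSet w b).nullMeasurableSet, preimage_argmaxSet_comp_prodCongr,
      Equiv.swap_apply_right]
  have hcover : ⋃ c, argmaxSet w c = unitCube (α × ι) := by
    refine Subset.antisymm (iUnion_subset fun c => inter_subset_left) fun v hv => ?_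
    obtain ⟨c, -, hc⟩ := Finset.exists_max_image Finset.univ (fun c => weightedSum w c v)
      Finset.univ_nonempty
    exact mem_iUnion.2 ⟨c, hv, fun d => hc d (Finset.mem_univ d)⟩
  have hdisj : Pairwise fun c d : α => AEDisjoint volume (argmaxSet w c) (argmaxSet w d) :=
    fun c d hcd => measure_mono_null (fun v hv => le_antisymm (hv.2.2 c) (hv.1.2 d))
      (volume_setOf_weightedSum_eq hw hcd)
  have hsum := measure_iUnion₀ hdisj fun c => (measurableSet_argmaxSet w c).nullMeasurableSet
  rw [hcover, volume_unitCube, tsum_fintype, Finset.sum_congr rfl fun c _ => hsymm c,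
    Finset.sum_const, Finset.card_univ, nsmul_eq_mul] at hsum
  exact ENNReal.eq_inv_of_mul_eq_one_left (by rw [mul_comm, hsum])

end Argmax

def prodFiberEquiv {α β κ : Type} (g : β → κ) : (Σ k, α × {b // g b = k}) ≃ α × β where
  toFun q := (q.2.1, q.2.2.1)
  invFun p := ⟨g p.2, (p.1, ⟨p.2, rfl⟩)⟩
  left_inv := by rintro ⟨k, a, b, rfl⟩; rfl
  right_inv _ := rfl

section Cells

variable {Ω A : Type}

lemma envCube_eq : EnvCube Ω A = unitCube (A × Ω) ×ˢ unitCube (A × Ω) := by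
  ext e
  simp only [EnvCube, mem_prod, mem_unitCube, mem_ofPred_eq]

def senderCell (s : Ω → A) : Set (A × Ω → ℝ) :=
  unitCube (A × Ω) ∩ {u | ∀ ω b, b ≠ s ω → u (b, ω) < u (s ω, ω)}

open Classical in
def receiverCell [Fintype Ω] (μ₀ : Ω → ℝ) (s : Ω → A) : Set (A × Ω → ℝ) :=
  unitCube (A × Ω) ∩ {v | ∀ a a', 0 ≤ ∑ ω with s ω = a, μ₀ ω * (v (a, ω) - v (a', ω))}

lemma senderCell_subset_unitCube (s : Ω → A) : senderCell s ⊆ unitCube (A × Ω) :=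
  inter_subset_left

lemma measurableSet_senderCell [Fintype Ω] [Fintype A] (s : Ω → A) : MeasurableSet (senderCell s) :=
  measurableSet_unitCube.inter (Measurable.setOf (by fun_prop))

lemma measurableSet_receiverCell [Fintype Ω] [Fintype A] (μ₀ : Ω → ℝ) (s : Ω → A) :
    MeasurableSet (receiverCell μ₀ s) :=
  measurableSet_unitCube.inter (Measurable.setOf (by fun_prop))

lemma pairwise_disjoint_senderCell :
    Pairwise fun s t : Ω → A => Disjoint (senderCell s) (senderCell t) := by
  intro s t hst
  obtain ⟨ω, hω⟩ := Function.ne_iff.1 hst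
  exact disjoint_left.2 fun u hs ht => lt_asymm (hs.2 ω (t ω) (Ne.symm hω)) (ht.2 ω (s ω) hω)

lemma volume_unitCube_diff_iUnion_senderCell [Fintype Ω] [Fintype A] [Nonempty A] :
    volume (unitCube (A × Ω) \ ⋃ s, senderCell s) = 0 := by
  have hties : unitCube (A × Ω) \ ⋃ s, senderCell s
      ⊆ ⋃ (ω : Ω) (b : A) (c : A) (_ : b ≠ c), {u | u (b, ω) = u (c, ω)} := by
    rintro u ⟨hu, hnot⟩
    choose s hs using fun ω =>
      Finset.exists_max_image Finset.univ (fun b => u (b, ω)) Finset.univ_nonempty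
    simp only [mem_iUnion, senderCell, mem_inter_iff, hu, true_and, mem_ofPred_eq, not_exists,
      not_forall] at hnot ⊢
    obtain ⟨ω, b, hb, hlt⟩ := hnot s
    exact ⟨ω, b, s ω, hb, le_antisymm ((hs ω).2 b (Finset.mem_univ b)) (not_lt.1 hlt)⟩
  refine measure_mono_null hties (measure_iUnion_null fun ω => measure_iUnion_null fun b =>
    measure_iUnion_null fun c => measure_iUnion_null fun hbc => ?_)
  classical
  have hw : (Pi.single ω 1 : Ω → ℝ) ≠ 0 := by simp
  simpa [weightedSum_apply, Pi.single_apply] using volume_setOf_weightedSum_eq hw hbc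

open Classical in
lemma idealStates_eq_filter_of_mem_senderCell [Fintype Ω] [Fintype A] {s : Ω → A}
    {u : A × Ω → ℝ} (hu : u ∈ senderCell s) (a : A) :
    idealStates u a = Finset.univ.filter fun ω => s ω = a := by
  ext ω
  simp only [idealStates, Finset.mem_filter, Finset.mem_univ, true_and]
  constructor
  · intro hmax
    by_contra hne
    exact (hu.2 ω a fun h => hne h.symm).not_ge (hmax (s ω))
  · rintro rfl b
    rcases eq_or_ne b (s ω) with rfl | hb
    exacts [le_rfl, (hu.2 ω b hb).le]

lemma felicitous_iff_mem_receiverCell [Fintype Ω] [Fintype A] {μ₀ : Ω → ℝ} {s : Ω → A}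
    {u v : A × Ω → ℝ} (hu : u ∈ senderCell s) (hv : v ∈ unitCube (A × Ω)) :
    Felicitous μ₀ u v ↔ v ∈ receiverCell μ₀ s := by
  simp only [Felicitous, receiverCell, mem_inter_iff, hv, true_and, mem_ofPred_eq,
    idealStates_eq_filter_of_mem_senderCell hu]

end Cells

section Volumes

variable {Ω A : Type} [Fintype Ω] [Fintype A]

lemma volume_felicitous_eq_sum [DecidableEq Ω] [Nonempty A] (μ₀ : Ω → ℝ) :
    volume (EnvCube Ω A ∩ {e | Felicitous μ₀ e.1 e.2})
      = ∑ s : Ω → A, volume (senderCell s) * volume (receiverCell μ₀ s) := by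
  have hsub : ⋃ s : Ω → A, senderCell s ×ˢ receiverCell μ₀ s
      ⊆ EnvCube Ω A ∩ {e | Felicitous μ₀ e.1 e.2} := by
    rintro ⟨u, v⟩ huv
    obtain ⟨s, hu, hv⟩ := mem_iUnion.1 huv
    exact ⟨envCube_eq ▸ ⟨hu.1, hv.1⟩, (felicitous_iff_mem_receiverCell hu hv.1).2 hv⟩
  have hdiff : (EnvCube Ω A ∩ {e | Felicitous μ₀ e.1 e.2}) \
        ⋃ s : Ω → A, senderCell s ×ˢ receiverCell μ₀ s
      ⊆ (unitCube (A × Ω) \ ⋃ s, senderCell s) ×ˢ univ := by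
    rintro ⟨u, v⟩ ⟨⟨hcube, hfel⟩, hnot⟩
    rw [envCube_eq] at hcube
    refine ⟨⟨hcube.1, fun hu => hnot ?_⟩, mem_univ v⟩
    obtain ⟨s, hs⟩ := mem_iUnion.1 hu
    exact mem_iUnion.2 ⟨s, hs, (felicitous_iff_mem_receiverCell hs hcube.2).1 hfel⟩
  have hnull : volume ((unitCube (A × Ω) \ ⋃ s, senderCell s) ×ˢ (univ : Set (A × Ω → ℝ))) = 0 := by
    rw [Measure.volume_eq_prod, Measure.prod_prod, volume_unitCube_diff_iUnion_senderCell, zero_mul]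
  rw [← measure_eq_measure_of_null_sdiff hsub (measure_mono_null hdiff hnull),
    measure_iUnion (fun s t hst => disjoint_prod.2 (.inl (pairwise_disjoint_senderCell hst)))
      fun s => (measurableSet_senderCell s).prod (measurableSet_receiverCell μ₀ s), tsum_fintype]
  simp_rw [Measure.volume_eq_prod, Measure.prod_prod]

lemma sum_volume_senderCell [DecidableEq Ω] [Nonempty A] :
    ∑ s : Ω → A, volume (senderCell s) = 1 := by
  rw [← volume_unitCube (ι := A × Ω), ← measure_eq_measure_of_null_sdiff
    (iUnion_subset senderCell_subset_unitCube) volume_unitCube_diff_iUnion_senderCell,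
    measure_iUnion pairwise_disjoint_senderCell measurableSet_senderCell, tsum_fintype]

lemma volume_receiverCell_le_one (μ₀ : Ω → ℝ) (s : Ω → A) : volume (receiverCell μ₀ s) ≤ 1 :=
  volume_unitCube (ι := A × Ω) ▸ measure_mono inter_subset_left

open Classical in
lemma volume_receiverCell_of_surjective [Nonempty A] {μ₀ : Ω → ℝ} (hμ₀ : ∀ ω, 0 < μ₀ ω)
    {s : Ω → A} (hs : s.Surjective) :
    volume (receiverCell μ₀ s) = (Fintype.card A : ℝ≥0∞)⁻¹ ^ Fintype.card A := by
  let F (a : A) : Set (A × {ω // s ω = a} → ℝ) := argmaxSet (fun j => μ₀ j) a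
  have hF : receiverCell μ₀ s = ⋂ a, {v | (fun j => v (prodFiberEquiv s ⟨a, j⟩)) ∈ F a} := by
    ext v
    simp only [receiverCell, argmaxSet, F, mem_inter_iff, mem_iInter, mem_ofPred_eq,
      mem_unitCube, weightedSum_apply, prodFiberEquiv, Equiv.coe_fn_mk, forall_and]
    refine and_congr ⟨fun h a p => h _, fun h p => h (s p.2) (p.1, ⟨p.2, rfl⟩)⟩
      (forall_congr' fun a => forall_congr' fun c => ?_)
    simp only [mul_sub, Finset.sum_sub_distrib, sub_nonneg]
    rw [Finset.sum_subtype (p := (s · = a)) _ (by simp),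
      Finset.sum_subtype (p := (s · = a)) _ (by simp)]
  rw [hF, volume_iInter_blocks (F := F) _ _ fun a => measurableSet_argmaxSet _ a,
    Finset.prod_congr rfl fun a _ => volume_argmaxSet ?_ a, Finset.prod_const, Finset.card_univ]
  obtain ⟨ω, rfl⟩ := hs a
  exact Function.ne_iff.2 ⟨⟨ω, rfl⟩, (hμ₀ ω).ne'⟩

lemma volume_iUnion_senderCell_avoiding_le [DecidableEq Ω] [Nonempty A] (a : A) :
    volume (⋃ (s : Ω → A) (_ : ∀ ω, s ω ≠ a), senderCell s)
      ≤ (1 - (Fintype.card A : ℝ≥0∞)⁻¹) ^ Fintype.card Ω := by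
  -- grouped by state, `u` lies in a product of the events "`a` is not a weak maximiser in `ω`"
  let G (ω : Ω) : Set (A × {ω' // id ω' = ω} → ℝ) := unitCube _ \ argmaxSet (fun _ => 1) a
  have hG (ω : Ω) : volume (G ω) = 1 - (Fintype.card A : ℝ≥0∞)⁻¹ := by
    have hcube : argmaxSet (fun _ : {ω' // id ω' = ω} => (1 : ℝ)) a ⊆ unitCube _ :=
      inter_subset_left
    rw [measure_sdiff hcube (measurableSet_argmaxSet _ a).nullMeasurableSet
      (volume_ne_top_of_subset_unitCube hcube), volume_unitCube,
      volume_argmaxSet (Function.ne_iff.2 ⟨⟨ω, rfl⟩, one_ne_zero⟩)]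
  have hsub : ⋃ (s : Ω → A) (_ : ∀ ω, s ω ≠ a), senderCell s
      ⊆ ⋂ ω, {u | (fun j => u (prodFiberEquiv id ⟨ω, j⟩)) ∈ G ω} := by
    simp only [iUnion_subset_iff]
    intro s hs u hu
    refine mem_iInter.2 fun ω => ⟨mem_unitCube.2 fun _ => mem_unitCube.1 hu.1 _, fun hmax => ?_⟩
    refine (hmax.2 (s ω)).not_gt ?_
    simp only [weightedSum_apply, one_mul]
    refine Finset.sum_lt_sum_of_nonempty ⟨⟨ω, rfl⟩, Finset.mem_univ _⟩ fun ⟨ω', hω'⟩ _ => ?_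
    subst hω'
    exact hu.2 ω' a (hs ω').symm
  refine (measure_mono hsub).trans_eq ?_
  rw [volume_iInter_blocks (F := G) _ _
      fun ω => measurableSet_unitCube.diff (measurableSet_argmaxSet _ a),
    Finset.prod_congr rfl fun ω _ => hG ω, Finset.prod_const, Finset.card_univ]

open Classical in
lemma sum_volume_senderCell_not_surjective_le [DecidableEq Ω] [Nonempty A] :
    ∑ s with ¬ (s : Ω → A).Surjective, volume (senderCell s)
      ≤ Fintype.card A * (1 - (Fintype.card A : ℝ≥0∞)⁻¹) ^ Fintype.card Ω := by
  rw [← measure_biUnion_finset (pairwise_disjoint_senderCell.set_pairwise _)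
    fun s _ => measurableSet_senderCell s]
  calc volume (⋃ s ∈ Finset.univ.filter fun s : Ω → A => ¬ s.Surjective, senderCell s)
      ≤ volume (⋃ (a : A) (s : Ω → A) (_ : ∀ ω, s ω ≠ a), senderCell s) := measure_mono ?_
    _ ≤ ∑ a : A, volume (⋃ (s : Ω → A) (_ : ∀ ω, s ω ≠ a), senderCell s) :=
      measure_iUnion_fintype_le _ _
    _ ≤ ∑ _a : A, (1 - (Fintype.card A : ℝ≥0∞)⁻¹) ^ Fintype.card Ω :=
      Finset.sum_le_sum fun a _ => volume_iUnion_senderCell_avoiding_le a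
    _ = _ := by simp
  simp only [iUnion_subset_iff]
  intro s hs
  obtain ⟨a, ha⟩ := not_forall.1 (Finset.mem_filter.1 hs).2
  exact subset_iUnion_of_subset a (subset_iUnion₂_of_subset s (not_exists.1 ha) subset_rfl)

end Volumes

lemma abs_sum_mul_sub_le {σ : Type*} [Fintype σ] (P : σ → Prop) [DecidablePred P]
    {p q : σ → ℝ} {κ : ℝ} (hp : ∀ s, 0 ≤ p s) (hp1 : ∑ s, p s = 1) (hq : ∀ s, q s ∈ Icc 0 1)
    (hκ : κ ∈ Icc 0 1) (hqP : ∀ s, P s → q s = κ) :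
    |∑ s, p s * q s - κ| ≤ ∑ s with ¬P s, p s := by
  have hsplit : ∑ s, p s * q s - κ = ∑ s with ¬P s, p s * (q s - κ) := by
    rw [Finset.sum_filter]
    calc ∑ s, p s * q s - κ = ∑ s, p s * (q s - κ) := by
          simp [mul_sub, Finset.sum_sub_distrib, ← Finset.sum_mul, hp1]
      _ = _ := Finset.sum_congr rfl fun s _ => by by_cases h : P s <;> simp [h, hqP]
  rw [hsplit]
  refine (Finset.abs_sum_le_sum_abs _ _).trans (Finset.sum_le_sum fun s _ => ?_)
  rw [abs_mul, abs_of_nonneg (hp s)]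
  exact mul_le_of_le_one_right (hp s) (abs_sub_le_iff.2
    ⟨by linarith [(hq s).2, hκ.1], by linarith [(hq s).1, hκ.2]⟩)

lemma abs_toReal_sum_mul_sub_le {σ : Type*} [Fintype σ] (P : σ → Prop) [DecidablePred P]
    {p q : σ → ℝ≥0∞} {κ : ℝ≥0∞} (hp1 : ∑ s, p s = 1) (hq : ∀ s, q s ≤ 1) (hκ : κ ≤ 1)
    (hqP : ∀ s, P s → q s = κ) :
    |(∑ s, p s * q s).toReal - κ.toReal| ≤ (∑ s with ¬P s, p s).toReal := by
  have hp_ne_top (s : σ) : p s ≠ ∞ :=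
    ne_top_of_le_ne_top ENNReal.one_ne_top
      (hp1 ▸ Finset.single_le_sum (by simp) (Finset.mem_univ s))
  have hq_ne_top (s : σ) : q s ≠ ∞ := ne_top_of_le_ne_top ENNReal.one_ne_top (hq s)
  have hunit {x : ℝ≥0∞} (hx : x ≤ 1) : x.toReal ∈ Icc 0 1 :=
    ⟨ENNReal.toReal_nonneg, by simpa using ENNReal.toReal_mono ENNReal.one_ne_top hx⟩
  rw [ENNReal.toReal_sum fun s _ => ENNReal.mul_ne_top (hp_ne_top s) (hq_ne_top s),
    ENNReal.toReal_sum fun s _ => hp_ne_top s]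
  simp only [ENNReal.toReal_mul]
  refine abs_sum_mul_sub_le P (fun s => ENNReal.toReal_nonneg) ?_ (fun s => hunit (hq s)) (hunit hκ)
    fun s hs => by rw [hqP s hs]
  rw [← ENNReal.toReal_sum fun s _ => hp_ne_top s, hp1, ENNReal.toReal_one]

lemma tendsto_mul_one_sub_inv_pow {n : ℝ} (hn : 1 ≤ n) :
    Tendsto (fun k : ℕ => n * (1 - n⁻¹) ^ k) atTop (𝓝 0) := by
  simpa using (tendsto_pow_atTop_nhds_zero_of_lt_one (sub_nonneg.2 (inv_le_one_of_one_le₀ hn))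
    (sub_lt_self _ (by positivity))).const_mul n

/-- Lemma (Kamenica–Lin): as `|Ω| → ∞`, the share of felicitous environments
converges to `1/|A|^|A|`. -/
theorem share_felicitous_limit
    (A : Type) [Fintype A] [Nonempty A] :
    ∀ ε : ℝ, 0 < ε → ∃ N : ℕ,
      ∀ (Ω : Type) [Fintype Ω] [Nonempty Ω], N ≤ Fintype.card Ω →
      ∀ μ₀ : Ω → ℝ, IsPrior μ₀ →
        |(volume (EnvCube Ω A ∩ {e | Felicitous μ₀ e.1 e.2})).toReal
          - 1 / (Fintype.card A : ℝ) ^ Fintype.card A| ≤ ε := by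
  intro ε hε
  have hA : (Fintype.card A : ℝ≥0∞)⁻¹ ≤ 1 :=
    ENNReal.inv_le_one.2 (Nat.one_le_cast.2 Fintype.card_pos)
  obtain ⟨N, hN⟩ := eventually_atTop.1 ((tendsto_mul_one_sub_inv_pow
    (Nat.one_le_cast.2 (Fintype.card_pos (α := A)))).eventually (ge_mem_nhds hε))
  refine ⟨N, fun Ω _ _ hΩ μ₀ hμ₀ => ?_⟩
  classical
  calc _ = |(volume (EnvCube Ω A ∩ {e | Felicitous μ₀ e.1 e.2})).toReal
          - ((Fintype.card A : ℝ≥0∞)⁻¹ ^ Fintype.card A).toReal| := by simp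
    _ ≤ (∑ s with ¬ (s : Ω → A).Surjective, volume (senderCell s)).toReal := by
      rw [volume_felicitous_eq_sum]
      exact abs_toReal_sum_mul_sub_le _ sum_volume_senderCell (volume_receiverCell_le_one μ₀)
        (pow_le_one' hA _) fun s hs => volume_receiverCell_of_surjective hμ₀.1 hs
    _ ≤ (Fintype.card A * (1 - (Fintype.card A : ℝ≥0∞)⁻¹) ^ Fintype.card Ω).toReal :=
      ENNReal.toReal_mono (by finiteness) sum_volume_senderCell_not_surjective_le
    _ = Fintype.card A * (1 - (Fintype.card A : ℝ)⁻¹) ^ Fintype.card Ω := by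
      simp [ENNReal.toReal_sub_of_le hA ENNReal.one_ne_top]
    _ ≤ ε := hN _ hΩ

end KL
end

section
/- Fix nonempty finite sets Ω and A, a finite message set M with |M| > max{|Ω|, |A|}, and an interior prior μ₀ on Ω. Then there is a transparently-generic set of transparent environments such that for every transparent environment (u_S, u_R) in that set: commitment is valuable if and only if committed Sender values randomization. -/
open MeasureTheory

namespace KL

variable {Ω A M : Type} [Fintype Ω] [Fintype A] [Fintype M]

section Aux
variable {Ω A M : Type} [Fintype Ω] [Fintype A] [Fintype M]

/-- Receiver's score of action `a` after message `m`. -/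
def Rsc (μ₀ : Ω → ℝ) (uR : A × Ω → ℝ) (σ : Ω → M → ℝ) (a : A) (m : M) : ℝ :=
  ∑ ω, μ₀ ω * σ ω m * uR (a, ω)

/-- Sender's value of message `m` under `ρ`. -/
def Vl (v : A → ℝ) (ρ : M → A → ℝ) (m : M) : ℝ := ∑ a, ρ m a * v a

lemma UR_eq (μ₀ : Ω → ℝ) (uR : A × Ω → ℝ) (σ : Ω → M → ℝ) (ρ : M → A → ℝ) :
    U μ₀ uR σ ρ = ∑ m, ∑ a, ρ m a * Rsc μ₀ uR σ a m := by
  unfold U Rsc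
  rw [Finset.sum_comm]
  refine Finset.sum_congr rfl fun m _ => ?_
  rw [Finset.sum_comm]
  refine Finset.sum_congr rfl fun a _ => ?_
  rw [Finset.mul_sum]
  exact Finset.sum_congr rfl fun ω _ => by ring

lemma US_eq (μ₀ : Ω → ℝ) (v : A → ℝ) (σ : Ω → M → ℝ) (ρ : M → A → ℝ) :
    U μ₀ (fun p => v p.1) σ ρ = ∑ ω, μ₀ ω * ∑ m, σ ω m * Vl v ρ m := by
  unfold U Vl
  refine Finset.sum_congr rfl fun ω _ => ?_
  rw [Finset.mul_sum]
  refine Finset.sum_congr rfl fun m _ => ?_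
  rw [Finset.mul_sum, Finset.mul_sum]
  exact Finset.sum_congr rfl fun a _ => by ring

open Classical in
/-- Dirac distribution. -/
noncomputable def dl {X : Type} (x : X) : X → ℝ := fun y => if y = x then 1 else 0

lemma dl_isDist {X : Type} [Fintype X] (x : X) : IsDist (dl x) := by
  classical
  constructor
  · intro y; unfold dl; split <;> norm_num
  · simp [dl]

lemma Vl_dl (v : A → ℝ) (c : M → A) (m : M) : Vl v (fun m' => dl (c m')) m = v (c m) := by
  classical
  simp [Vl, dl, ite_mul]

lemma sum_dist_mul {X : Type} [Fintype X] {f : X → ℝ} (hf : IsDist f) (K : ℝ) :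
    ∑ x, f x * K = K := by
  rw [← Finset.sum_mul, hf.2, one_mul]

end Aux

section Aux2
set_option linter.unusedSectionVars false
open scoped Classical
variable {Ω A M : Type} [Fintype Ω] [Fintype A] [Fintype M]

lemma RBR_of_choice (μ₀ : Ω → ℝ) (uR : A × Ω → ℝ) (σ : Ω → M → ℝ) (c : M → A)
    (hc : ∀ m b, Rsc μ₀ uR σ b m ≤ Rsc μ₀ uR σ (c m) m) :
    RBR μ₀ uR σ (fun m => dl (c m)) := by
  classical
  intro ρ' hρ'
  rw [UR_eq, UR_eq]
  calc ∑ m, ∑ a, ρ' m a * Rsc μ₀ uR σ a m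
      ≤ ∑ m, ∑ a, ρ' m a * Rsc μ₀ uR σ (c m) m := by
        refine Finset.sum_le_sum fun m _ => Finset.sum_le_sum fun a _ => ?_
        exact mul_le_mul_of_nonneg_left (hc m a) ((hρ' m).1 a)
    _ = ∑ m, Rsc μ₀ uR σ (c m) m := Finset.sum_congr rfl fun m _ => sum_dist_mul (hρ' m) _
    _ = ∑ m, ∑ a, (fun m' => dl (c m')) m a * Rsc μ₀ uR σ a m := by
        refine Finset.sum_congr rfl fun m _ => ?_
        simp [dl, ite_mul]

open Classical in
/-- Transfer, after message `m`, all action mass from `a` to `b`. -/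
noncomputable def tweakAct (ρ : M → A → ℝ) (m : M) (a b : A) : M → A → ℝ :=
  fun m' a' => if m' = m
    then ρ m' a' + (if a' = b then ρ m a else 0) - (if a' = a then ρ m a else 0)
    else ρ m' a'

lemma tweakAct_same (ρ : M → A → ℝ) (m : M) (a b a' : A) :
    tweakAct ρ m a b m a' = ρ m a' + (if a' = b then ρ m a else 0)
      - (if a' = a then ρ m a else 0) := by
  unfold tweakAct; rw [if_pos rfl]

lemma tweakAct_other (ρ : M → A → ℝ) (m : M) (a b : A) {m' : M} (h : m' ≠ m) (a' : A) :
    tweakAct ρ m a b m' a' = ρ m' a' := by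
  unfold tweakAct; rw [if_neg h]

lemma RBR_support (μ₀ : Ω → ℝ) (uR : A × Ω → ℝ) {σ : Ω → M → ℝ} {ρ : M → A → ℝ}
    (hρ : IsAct ρ) (h : RBR μ₀ uR σ ρ) {m : M} {a : A} (ha : 0 < ρ m a) (b : A) :
    Rsc μ₀ uR σ b m ≤ Rsc μ₀ uR σ a m := by
  classical
  by_contra hlt
  push_neg at hlt
  have hab : a ≠ b := by rintro rfl; exact lt_irrefl _ hlt
  have hActs : IsAct (tweakAct ρ m a b) := by
    intro m'
    by_cases hm : m' = m
    · rw [hm]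
      constructor
      · intro a'
        rw [tweakAct_same]
        by_cases h1 : a' = a
        · subst h1; rw [if_neg hab, if_pos rfl]; ring_nf; norm_num
        · rw [if_neg h1]
          by_cases h2 : a' = b
          · subst h2; rw [if_pos rfl]; have := (hρ m).1 a'; linarith [(hρ m).1 a]
          · rw [if_neg h2]; simpa using (hρ m).1 a'
      · simp only [tweakAct_same]
        rw [Finset.sum_sub_distrib, Finset.sum_add_distrib,
          Finset.sum_ite_eq' Finset.univ b (fun _ => ρ m a),
          Finset.sum_ite_eq' Finset.univ a (fun _ => ρ m a)]
        simp [(hρ m).2]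
    · constructor
      · intro a'; rw [tweakAct_other _ _ _ _ hm]; exact (hρ m').1 a'
      · simp only [tweakAct_other _ _ _ _ hm]; exact (hρ m').2
  have key : U μ₀ uR σ (tweakAct ρ m a b)
      = U μ₀ uR σ ρ + ρ m a * (Rsc μ₀ uR σ b m - Rsc μ₀ uR σ a m) := by
    rw [UR_eq, UR_eq]
    have inner : ∀ m', ∑ a', tweakAct ρ m a b m' a' * Rsc μ₀ uR σ a' m'
        = (∑ a', ρ m' a' * Rsc μ₀ uR σ a' m')
          + (if m' = m then ρ m a * (Rsc μ₀ uR σ b m - Rsc μ₀ uR σ a m) else 0) := by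
      intro m'
      by_cases hm : m' = m
      · rw [hm, if_pos rfl]
        simp only [tweakAct_same, sub_mul, add_mul, ite_mul, zero_mul]
        rw [Finset.sum_sub_distrib, Finset.sum_add_distrib,
          Finset.sum_ite_eq' Finset.univ b (fun a' => ρ m a * Rsc μ₀ uR σ a' m),
          Finset.sum_ite_eq' Finset.univ a (fun a' => ρ m a * Rsc μ₀ uR σ a' m)]
        simp only [Finset.mem_univ, if_true]
        ring
      · rw [if_neg hm]
        simp only [tweakAct_other _ _ _ _ hm, add_zero]
    rw [Finset.sum_congr rfl fun m' _ => inner m', Finset.sum_add_distrib,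
      Finset.sum_ite_eq' Finset.univ m
        (fun _ => ρ m a * (Rsc μ₀ uR σ b m - Rsc μ₀ uR σ a m))]
    simp
  have hgain : U μ₀ uR σ ρ < U μ₀ uR σ (tweakAct ρ m a b) := by
    rw [key]
    have : 0 < ρ m a * (Rsc μ₀ uR σ b m - Rsc μ₀ uR σ a m) :=
      mul_pos ha (by linarith)
    linarith
  exact absurd (h _ hActs) (not_le.2 hgain)

open Classical in
/-- Transfer, in state `ω`, all message mass from `m` to `m₂`. -/
noncomputable def tweakMsg (σ : Ω → M → ℝ) (ω : Ω) (m m₂ : M) : Ω → M → ℝ :=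
  fun ω' m' => if ω' = ω
    then σ ω' m' + (if m' = m₂ then σ ω m else 0) - (if m' = m then σ ω m else 0)
    else σ ω' m'

lemma tweakMsg_same (σ : Ω → M → ℝ) (ω : Ω) (m m₂ m' : M) :
    tweakMsg σ ω m m₂ ω m' = σ ω m' + (if m' = m₂ then σ ω m else 0)
      - (if m' = m then σ ω m else 0) := by
  unfold tweakMsg; rw [if_pos rfl]

lemma tweakMsg_other (σ : Ω → M → ℝ) (ω : Ω) (m m₂ : M) {ω' : Ω} (h : ω' ≠ ω) (m' : M) :
    tweakMsg σ ω m m₂ ω' m' = σ ω' m' := by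
  unfold tweakMsg; rw [if_neg h]

lemma SBR_support (μ₀ : Ω → ℝ) (hμ : ∀ ω, 0 < μ₀ ω) (v : A → ℝ) {σ : Ω → M → ℝ}
    {ρ : M → A → ℝ} (hσ : IsMsg σ) (h : SBR μ₀ (fun p => v p.1) σ ρ) {ω : Ω} {m : M}
    (hpos : 0 < σ ω m) (m₂ : M) : Vl v ρ m₂ ≤ Vl v ρ m := by
  classical
  by_contra hlt
  push_neg at hlt
  have hmm : m ≠ m₂ := by rintro rfl; exact lt_irrefl _ hlt
  have hMsgs : IsMsg (tweakMsg σ ω m m₂) := by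
    intro ω'
    by_cases hw : ω' = ω
    · rw [hw]
      constructor
      · intro m'
        rw [tweakMsg_same]
        by_cases h1 : m' = m
        · subst h1; rw [if_neg hmm, if_pos rfl]; ring_nf; norm_num
        · rw [if_neg h1]
          by_cases h2 : m' = m₂
          · subst h2; rw [if_pos rfl]; have := (hσ ω).1 m'; linarith [(hσ ω).1 m]
          · rw [if_neg h2]; simpa using (hσ ω).1 m'
      · simp only [tweakMsg_same]
        rw [Finset.sum_sub_distrib, Finset.sum_add_distrib,
          Finset.sum_ite_eq' Finset.univ m₂ (fun _ => σ ω m),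
          Finset.sum_ite_eq' Finset.univ m (fun _ => σ ω m)]
        simp [(hσ ω).2]
    · constructor
      · intro m'; rw [tweakMsg_other _ _ _ _ hw]; exact (hσ ω').1 m'
      · simp only [tweakMsg_other _ _ _ _ hw]; exact (hσ ω').2
  have key : U μ₀ (fun p => v p.1) (tweakMsg σ ω m m₂) ρ
      = U μ₀ (fun p => v p.1) σ ρ + μ₀ ω * (σ ω m * (Vl v ρ m₂ - Vl v ρ m)) := by
    rw [US_eq, US_eq]
    have inner : ∀ ω', μ₀ ω' * ∑ m', tweakMsg σ ω m m₂ ω' m' * Vl v ρ m'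
        = (μ₀ ω' * ∑ m', σ ω' m' * Vl v ρ m')
          + (if ω' = ω then μ₀ ω * (σ ω m * (Vl v ρ m₂ - Vl v ρ m)) else 0) := by
      intro ω'
      by_cases hw : ω' = ω
      · rw [hw, if_pos rfl]
        simp only [tweakMsg_same, sub_mul, add_mul, ite_mul, zero_mul]
        rw [Finset.sum_sub_distrib, Finset.sum_add_distrib,
          Finset.sum_ite_eq' Finset.univ m₂ (fun m' => σ ω m * Vl v ρ m'),
          Finset.sum_ite_eq' Finset.univ m (fun m' => σ ω m * Vl v ρ m')]
        simp only [Finset.mem_univ, if_true]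
        ring
      · rw [if_neg hw]
        simp only [tweakMsg_other _ _ _ _ hw, add_zero]
    rw [Finset.sum_congr rfl fun ω' _ => inner ω', Finset.sum_add_distrib,
      Finset.sum_ite_eq' Finset.univ ω
        (fun _ => μ₀ ω * (σ ω m * (Vl v ρ m₂ - Vl v ρ m)))]
    simp
  have hgain : U μ₀ (fun p => v p.1) σ ρ < U μ₀ (fun p => v p.1) (tweakMsg σ ω m m₂) ρ := by
    rw [key]
    have : 0 < μ₀ ω * (σ ω m * (Vl v ρ m₂ - Vl v ρ m)) :=
      mul_pos (hμ ω) (mul_pos hpos (by linarith))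
    linarith
  exact absurd (h _ hMsgs) (not_le.2 hgain)

lemma US_const (μ₀ : Ω → ℝ) (hμ : ∑ ω, μ₀ ω = 1) (v : A → ℝ) {σ : Ω → M → ℝ}
    {ρ : M → A → ℝ} (hσ : IsMsg σ) {c : ℝ} (hc : ∀ m, Vl v ρ m = c) :
    U μ₀ (fun p => v p.1) σ ρ = c := by
  rw [US_eq]
  have : ∀ ω, μ₀ ω * ∑ m, σ ω m * Vl v ρ m = μ₀ ω * c := by
    intro ω
    congr 1
    rw [Finset.sum_congr rfl fun m _ => by rw [hc m]]
    exact sum_dist_mul (hσ ω) c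
  rw [Finset.sum_congr rfl fun ω _ => this ω, ← Finset.sum_mul, hμ, one_mul]

lemma SBR_of_const (μ₀ : Ω → ℝ) (hμ : ∑ ω, μ₀ ω = 1) (v : A → ℝ) {σ : Ω → M → ℝ}
    {ρ : M → A → ℝ} (hσ : IsMsg σ) {c : ℝ} (hc : ∀ m, Vl v ρ m = c) :
    SBR μ₀ (fun p => v p.1) σ ρ := by
  intro σ' hσ'
  rw [US_const μ₀ hμ v hσ hc, US_const μ₀ hμ v hσ' hc]

end Aux2

section Aux3
set_option linter.unusedSectionVars false
open scoped Classical
variable {Ω A M : Type} [Fintype Ω] [Fintype A] [Fintype M]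

lemma dist_le_one {X : Type} [Fintype X] {f : X → ℝ} (hf : IsDist f) (x : X) : f x ≤ 1 := by
  calc f x ≤ ∑ y, f y := Finset.single_le_sum (fun i _ => hf.1 i) (Finset.mem_univ x)
    _ = 1 := hf.2

lemma U_le_one {μ₀ : Ω → ℝ} (hμ : IsPrior μ₀) {u : A × Ω → ℝ}
    (hu : ∀ p, u p ∈ Set.Icc (0:ℝ) 1) {σ : Ω → M → ℝ} {ρ : M → A → ℝ}
    (hσ : IsMsg σ) (hρ : IsAct ρ) : U μ₀ u σ ρ ≤ 1 := by
  have h1 : ∀ ω m, ∑ a, μ₀ ω * σ ω m * ρ m a * u (a, ω) ≤ μ₀ ω * σ ω m := by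
    intro ω m
    have : ∀ a, μ₀ ω * σ ω m * ρ m a * u (a, ω) ≤ μ₀ ω * σ ω m * ρ m a := by
      intro a
      apply mul_le_of_le_one_right
      · exact mul_nonneg (mul_nonneg (hμ.1 ω).le ((hσ ω).1 m)) ((hρ m).1 a)
      · exact (hu (a, ω)).2
    calc ∑ a, μ₀ ω * σ ω m * ρ m a * u (a, ω) ≤ ∑ a, μ₀ ω * σ ω m * ρ m a :=
          Finset.sum_le_sum fun a _ => this a
      _ = μ₀ ω * σ ω m * ∑ a, ρ m a := by rw [Finset.mul_sum]
      _ = μ₀ ω * σ ω m := by rw [(hρ m).2, mul_one]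
  calc U μ₀ u σ ρ ≤ ∑ ω, ∑ m, μ₀ ω * σ ω m :=
        Finset.sum_le_sum fun ω _ => Finset.sum_le_sum fun m _ => h1 ω m
    _ = ∑ ω, μ₀ ω := by
        refine Finset.sum_congr rfl fun ω _ => ?_
        rw [← Finset.mul_sum, (hσ ω).2, mul_one]
    _ = 1 := hμ.2

lemma exists_babbling [Nonempty A] [Nonempty M] {μ₀ : Ω → ℝ} (hμ : IsPrior μ₀)
    (v : A → ℝ) (uR : A × Ω → ℝ) :
    ∃ (σ : Ω → M → ℝ) (ρ : M → A → ℝ),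
      Partitional σ ∧ CTEq μ₀ (fun p => v p.1) uR σ ρ := by
  classical
  obtain ⟨m₀⟩ := ‹Nonempty M›
  obtain ⟨astar, -, hastar⟩ :=
    Finset.exists_max_image Finset.univ (fun a => ∑ ω, μ₀ ω * uR (a, ω)) Finset.univ_nonempty
  refine ⟨fun _ => dl m₀, fun _ => dl astar, fun ω => ⟨m₀, by simp [dl]⟩,
    fun ω => dl_isDist m₀, fun m => dl_isDist astar, ?_, ?_⟩
  · exact SBR_of_const μ₀ hμ.2 v
      (fun ω => dl_isDist m₀) (fun m => Vl_dl v (fun _ => astar) m)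
  · exact RBR_of_choice μ₀ uR _ (fun _ => astar) (fun m b => by
      by_cases h : m = m₀ <;>
        simp [Rsc, dl, h, hastar b (Finset.mem_univ b)])

end Aux3

section Aux4
set_option linter.unusedSectionVars false
open scoped Classical
variable {Ω A M : Type} [Fintype Ω] [Fintype A] [Fintype M]

/-- Bounded environment: all payoffs in the cube. -/
structure Bnd (μ₀ : Ω → ℝ) (v : A → ℝ) (uR : A × Ω → ℝ) : Prop where
  prior : IsPrior μ₀
  hv : ∀ a, v a ∈ Set.Icc (0:ℝ) 1
  hu : ∀ p, uR p ∈ Set.Icc (0:ℝ) 1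

variable {μ₀ : Ω → ℝ} {v : A → ℝ} {uR : A × Ω → ℝ}

lemma Bnd.us (h : Bnd μ₀ v uR) : ∀ p : A × Ω, (fun p : A × Ω => v p.1) p ∈ Set.Icc (0:ℝ) 1 :=
  fun p => h.hv p.1

lemma le_persPayoff (hb : Bnd μ₀ v uR) {σ : Ω → M → ℝ} {ρ : M → A → ℝ}
    (h : PersProfile μ₀ uR σ ρ) :
    U μ₀ (fun p => v p.1) σ ρ ≤ persPayoff (M := M) μ₀ (fun p => v p.1) uR := by
  apply le_csSup
  · exact ⟨1, by rintro x ⟨σ', ρ', h', rfl⟩; exact U_le_one hb.prior hb.us h'.1 h'.2.1⟩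
  · exact ⟨σ, ρ, h, rfl⟩

lemma le_partPersPayoff (hb : Bnd μ₀ v uR) {σ : Ω → M → ℝ} {ρ : M → A → ℝ}
    (hpart : Partitional σ) (h : PersProfile μ₀ uR σ ρ) :
    U μ₀ (fun p => v p.1) σ ρ ≤ partPersPayoff (M := M) μ₀ (fun p => v p.1) uR := by
  apply le_csSup
  · exact ⟨1, by rintro x ⟨σ', ρ', h1', h2', rfl⟩; exact U_le_one hb.prior hb.us h2'.1 h2'.2.1⟩
  · exact ⟨σ, ρ, hpart, h, rfl⟩

lemma le_ctPayoff (hb : Bnd μ₀ v uR) {σ : Ω → M → ℝ} {ρ : M → A → ℝ}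
    (h : CTEq μ₀ (fun p => v p.1) uR σ ρ) :
    U μ₀ (fun p => v p.1) σ ρ ≤ ctPayoff (M := M) μ₀ (fun p => v p.1) uR := by
  apply le_csSup
  · exact ⟨1, by rintro x ⟨σ', ρ', h', rfl⟩; exact U_le_one hb.prior hb.us h'.1 h'.2.1⟩
  · exact ⟨σ, ρ, h, rfl⟩

lemma ct_le_pers [Nonempty A] [Nonempty M] (hb : Bnd μ₀ v uR) :
    ctPayoff (M := M) μ₀ (fun p => v p.1) uR ≤ persPayoff (M := M) μ₀ (fun p => v p.1) uR := by
  apply csSup_le_csSup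
  · exact ⟨1, by rintro x ⟨σ', ρ', h', rfl⟩; exact U_le_one hb.prior hb.us h'.1 h'.2.1⟩
  · obtain ⟨σ, ρ, _, hct⟩ := exists_babbling (M := M) hb.prior v uR
    exact ⟨_, σ, ρ, hct, rfl⟩
  · rintro x ⟨σ, ρ, h, rfl⟩
    exact ⟨σ, ρ, ⟨h.1, h.2.1, h.2.2.2⟩, rfl⟩

lemma partPers_le_pers [Nonempty A] [Nonempty M] (hb : Bnd μ₀ v uR) :
    partPersPayoff (M := M) μ₀ (fun p => v p.1) uR
      ≤ persPayoff (M := M) μ₀ (fun p => v p.1) uR := by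
  apply csSup_le_csSup
  · exact ⟨1, by rintro x ⟨σ', ρ', h', rfl⟩; exact U_le_one hb.prior hb.us h'.1 h'.2.1⟩
  · obtain ⟨σ, ρ, hpart, hct⟩ := exists_babbling (M := M) hb.prior v uR
    exact ⟨_, σ, ρ, hpart, ⟨hct.1, hct.2.1, hct.2.2.2⟩, rfl⟩
  · rintro x ⟨σ, ρ, _, h, rfl⟩
    exact ⟨σ, ρ, h, rfl⟩

/-! Compactness and attainment -/

lemma continuous_U_pair (μ₀ : Ω → ℝ) (u : A × Ω → ℝ) :
    Continuous fun p : (Ω → M → ℝ) × (M → A → ℝ) => U μ₀ u p.1 p.2 := by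
  unfold U
  apply continuous_finset_sum
  intro ω _
  apply continuous_finset_sum
  intro m _
  apply continuous_finset_sum
  intro a _
  have h1 : Continuous fun p : (Ω → M → ℝ) × (M → A → ℝ) => p.1 ω m :=
    (continuous_apply m).comp ((continuous_apply ω).comp continuous_fst)
  have h2 : Continuous fun p : (Ω → M → ℝ) × (M → A → ℝ) => p.2 m a :=
    (continuous_apply a).comp ((continuous_apply m).comp continuous_snd)
  exact ((continuous_const.mul h1).mul h2).mul continuous_const

lemma continuous_U_snd (μ₀ : Ω → ℝ) (u : A × Ω → ℝ) (σ' : Ω → M → ℝ) :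
    Continuous fun p : (Ω → M → ℝ) × (M → A → ℝ) => U μ₀ u σ' p.2 := by
  unfold U
  apply continuous_finset_sum
  intro ω _
  apply continuous_finset_sum
  intro m _
  apply continuous_finset_sum
  intro a _
  have h2 : Continuous fun p : (Ω → M → ℝ) × (M → A → ℝ) => p.2 m a :=
    (continuous_apply a).comp ((continuous_apply m).comp continuous_snd)
  exact (continuous_const.mul h2).mul continuous_const

lemma continuous_U_fst (μ₀ : Ω → ℝ) (u : A × Ω → ℝ) (ρ' : M → A → ℝ) :
    Continuous fun p : (Ω → M → ℝ) × (M → A → ℝ) => U μ₀ u p.1 ρ' := by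
  unfold U
  apply continuous_finset_sum
  intro ω _
  apply continuous_finset_sum
  intro m _
  apply continuous_finset_sum
  intro a _
  have h1 : Continuous fun p : (Ω → M → ℝ) × (M → A → ℝ) => p.1 ω m :=
    (continuous_apply m).comp ((continuous_apply ω).comp continuous_fst)
  exact ((continuous_const.mul h1).mul continuous_const).mul continuous_const

lemma isClosed_isMsg : IsClosed {p : (Ω → M → ℝ) × (M → A → ℝ) | IsMsg p.1} := by
  have : {p : (Ω → M → ℝ) × (M → A → ℝ) | IsMsg p.1}
      = ⋂ ω, ((⋂ m, {p : (Ω → M → ℝ) × (M → A → ℝ) | 0 ≤ p.1 ω m})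
          ∩ {p : (Ω → M → ℝ) × (M → A → ℝ) | (∑ m, p.1 ω m) = 1}) := by
    ext p; simp [IsMsg, IsDist, Set.mem_iInter, forall_and]
  rw [this]
  refine isClosed_iInter fun ω => IsClosed.inter (isClosed_iInter fun m => ?_) ?_
  · exact isClosed_le continuous_const
      ((continuous_apply m).comp ((continuous_apply ω).comp continuous_fst))
  · exact isClosed_eq (continuous_finset_sum _ fun m _ =>
      ((continuous_apply m).comp ((continuous_apply ω).comp continuous_fst))) continuous_const

lemma isClosed_isAct : IsClosed {p : (Ω → M → ℝ) × (M → A → ℝ) | IsAct p.2} := by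
  have : {p : (Ω → M → ℝ) × (M → A → ℝ) | IsAct p.2}
      = ⋂ m, ((⋂ a, {p : (Ω → M → ℝ) × (M → A → ℝ) | 0 ≤ p.2 m a})
          ∩ {p : (Ω → M → ℝ) × (M → A → ℝ) | (∑ a, p.2 m a) = 1}) := by
    ext p; simp [IsAct, IsDist, Set.mem_iInter, forall_and]
  rw [this]
  refine isClosed_iInter fun m => IsClosed.inter (isClosed_iInter fun a => ?_) ?_
  · exact isClosed_le continuous_const
      ((continuous_apply a).comp ((continuous_apply m).comp continuous_snd))
  · exact isClosed_eq (continuous_finset_sum _ fun a _ =>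
      ((continuous_apply a).comp ((continuous_apply m).comp continuous_snd))) continuous_const

lemma isClosed_SBR (μ₀ : Ω → ℝ) (u : A × Ω → ℝ) :
    IsClosed {p : (Ω → M → ℝ) × (M → A → ℝ) | SBR μ₀ u p.1 p.2} := by
  have : {p : (Ω → M → ℝ) × (M → A → ℝ) | SBR μ₀ u p.1 p.2}
      = ⋂ σ' : Ω → M → ℝ,
        {p : (Ω → M → ℝ) × (M → A → ℝ) | IsMsg σ' → U μ₀ u σ' p.2 ≤ U μ₀ u p.1 p.2} := by
    ext p; simp [SBR, Set.mem_iInter]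
  rw [this]
  refine isClosed_iInter fun σ' => ?_
  by_cases hσ' : IsMsg σ'
  · have : {p : (Ω → M → ℝ) × (M → A → ℝ) | IsMsg σ' → U μ₀ u σ' p.2 ≤ U μ₀ u p.1 p.2}
        = {p : (Ω → M → ℝ) × (M → A → ℝ) | U μ₀ u σ' p.2 ≤ U μ₀ u p.1 p.2} := by
      ext p; simp [hσ']
    rw [this]
    exact isClosed_le (continuous_U_snd μ₀ u σ') (continuous_U_pair μ₀ u)
  · have : {p : (Ω → M → ℝ) × (M → A → ℝ) | IsMsg σ' → U μ₀ u σ' p.2 ≤ U μ₀ u p.1 p.2}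
        = Set.univ := by
      ext p; simp [hσ']
    rw [this]; exact isClosed_univ

lemma isClosed_RBR (μ₀ : Ω → ℝ) (u : A × Ω → ℝ) :
    IsClosed {p : (Ω → M → ℝ) × (M → A → ℝ) | RBR μ₀ u p.1 p.2} := by
  have : {p : (Ω → M → ℝ) × (M → A → ℝ) | RBR μ₀ u p.1 p.2}
      = ⋂ ρ' : M → A → ℝ,
        {p : (Ω → M → ℝ) × (M → A → ℝ) | IsAct ρ' → U μ₀ u p.1 ρ' ≤ U μ₀ u p.1 p.2} := by
    ext p; simp [RBR, Set.mem_iInter]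
  rw [this]
  refine isClosed_iInter fun ρ' => ?_
  by_cases hρ' : IsAct ρ'
  · have : {p : (Ω → M → ℝ) × (M → A → ℝ) | IsAct ρ' → U μ₀ u p.1 ρ' ≤ U μ₀ u p.1 p.2}
        = {p : (Ω → M → ℝ) × (M → A → ℝ) | U μ₀ u p.1 ρ' ≤ U μ₀ u p.1 p.2} := by
      ext p; simp [hρ']
    rw [this]
    exact isClosed_le (continuous_U_fst μ₀ u ρ') (continuous_U_pair μ₀ u)
  · have : {p : (Ω → M → ℝ) × (M → A → ℝ) | IsAct ρ' → U μ₀ u p.1 ρ' ≤ U μ₀ u p.1 p.2}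
        = Set.univ := by
      ext p; simp [hρ']
    rw [this]; exact isClosed_univ

lemma isClosed_partitional : IsClosed {p : (Ω → M → ℝ) × (M → A → ℝ) | Partitional p.1} := by
  have : {p : (Ω → M → ℝ) × (M → A → ℝ) | Partitional p.1}
      = ⋃ t : Ω → M, ⋂ ω, {p : (Ω → M → ℝ) × (M → A → ℝ) | p.1 ω (t ω) = 1} := by
    ext p
    constructor
    · intro h
      choose t ht using h
      exact Set.mem_iUnion.2 ⟨t, Set.mem_iInter.2 fun ω => ht ω⟩
    · intro h
      obtain ⟨t, ht⟩ := Set.mem_iUnion.1 h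
      exact fun ω => ⟨t ω, Set.mem_iInter.1 ht ω⟩
  rw [this]
  refine isClosed_iUnion_of_finite fun t => isClosed_iInter fun ω => ?_
  exact isClosed_eq ((continuous_apply (t ω)).comp ((continuous_apply ω).comp continuous_fst))
    continuous_const

lemma isCompact_box : IsCompact {p : (Ω → M → ℝ) × (M → A → ℝ) |
    (∀ ω m, p.1 ω m ∈ Set.Icc (0:ℝ) 1) ∧ ∀ m a, p.2 m a ∈ Set.Icc (0:ℝ) 1} := by
  have : {p : (Ω → M → ℝ) × (M → A → ℝ) |
        (∀ ω m, p.1 ω m ∈ Set.Icc (0:ℝ) 1) ∧ ∀ m a, p.2 m a ∈ Set.Icc (0:ℝ) 1}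
      = (Set.univ.pi fun _ : Ω => Set.univ.pi fun _ : M => Set.Icc (0:ℝ) 1) ×ˢ
        (Set.univ.pi fun _ : M => Set.univ.pi fun _ : A => Set.Icc (0:ℝ) 1) := by
    ext p
    simp only [Set.mem_setOf_eq, Set.mem_prod, Set.mem_pi, Set.mem_univ, forall_true_left,
      Set.mem_Icc, true_implies]
  rw [this]
  exact (isCompact_univ_pi fun _ => isCompact_univ_pi fun _ => isCompact_Icc).prod
    (isCompact_univ_pi fun _ => isCompact_univ_pi fun _ => isCompact_Icc)

lemma isCompact_of_profiles {K : Set ((Ω → M → ℝ) × (M → A → ℝ))} (hcl : IsClosed K)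
    (hsub : ∀ p ∈ K, IsMsg p.1 ∧ IsAct p.2) : IsCompact K := by
  apply IsCompact.of_isClosed_subset isCompact_box hcl
  intro p hp
  obtain ⟨h1, h2⟩ := hsub p hp
  exact ⟨fun ω m => ⟨(h1 ω).1 m, dist_le_one (h1 ω) m⟩,
    fun m a => ⟨(h2 m).1 a, dist_le_one (h2 m) a⟩⟩

lemma exists_ct_max [Nonempty A] [Nonempty M] (hμ : IsPrior μ₀) :
    ∃ (σ : Ω → M → ℝ) (ρ : M → A → ℝ), CTEq μ₀ (fun p => v p.1) uR σ ρ ∧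
      U μ₀ (fun p => v p.1) σ ρ = ctPayoff (M := M) μ₀ (fun p => v p.1) uR := by
  have hK : IsCompact {p : (Ω → M → ℝ) × (M → A → ℝ) | CTEq μ₀ (fun p => v p.1) uR p.1 p.2} := by
    apply isCompact_of_profiles
    · have : {p : (Ω → M → ℝ) × (M → A → ℝ) | CTEq μ₀ (fun p => v p.1) uR p.1 p.2}
          = {p : (Ω → M → ℝ) × (M → A → ℝ) | IsMsg p.1} ∩ ({p | IsAct p.2}
            ∩ ({p | SBR μ₀ (fun p => v p.1) p.1 p.2} ∩ {p | RBR μ₀ uR p.1 p.2})) := by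
        ext p; simp only [CTEq, Set.mem_setOf_eq, Set.mem_inter_iff, and_assoc]
      rw [this]
      exact isClosed_isMsg.inter (isClosed_isAct.inter
        ((isClosed_SBR μ₀ _).inter (isClosed_RBR μ₀ uR)))
    · exact fun p hp => ⟨hp.1, hp.2.1⟩
  have hne : {p : (Ω → M → ℝ) × (M → A → ℝ) | CTEq μ₀ (fun p => v p.1) uR p.1 p.2}.Nonempty := by
    obtain ⟨σ, ρ, _, h⟩ := exists_babbling (M := M) hμ v uR
    exact ⟨(σ, ρ), h⟩
  have himg := (hK.image (continuous_U_pair μ₀ (fun p => v p.1))).sSup_mem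
    (hne.image _)
  have hrw : ctPayoff (M := M) μ₀ (fun p => v p.1) uR
      = sSup ((fun p : (Ω → M → ℝ) × (M → A → ℝ) => U μ₀ (fun p => v p.1) p.1 p.2) ''
          {p | CTEq μ₀ (fun p => v p.1) uR p.1 p.2}) := by
    unfold ctPayoff
    congr 1
    ext x
    constructor
    · rintro ⟨σ, ρ, h, rfl⟩; exact ⟨(σ, ρ), h, rfl⟩
    · rintro ⟨⟨σ, ρ⟩, h, rfl⟩; exact ⟨σ, ρ, h, rfl⟩
  rw [hrw]
  obtain ⟨⟨σ, ρ⟩, h, hval⟩ := himg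
  exact ⟨σ, ρ, h, hval⟩

lemma exists_partPers_max [Nonempty A] [Nonempty M] (hμ : IsPrior μ₀) :
    ∃ (σ : Ω → M → ℝ) (ρ : M → A → ℝ), Partitional σ ∧ PersProfile μ₀ uR σ ρ ∧
      U μ₀ (fun p => v p.1) σ ρ = partPersPayoff (M := M) μ₀ (fun p => v p.1) uR := by
  have hK : IsCompact {p : (Ω → M → ℝ) × (M → A → ℝ) |
      Partitional p.1 ∧ PersProfile μ₀ uR p.1 p.2} := by
    apply isCompact_of_profiles
    · have : {p : (Ω → M → ℝ) × (M → A → ℝ) | Partitional p.1 ∧ PersProfile μ₀ uR p.1 p.2}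
          = {p : (Ω → M → ℝ) × (M → A → ℝ) | Partitional p.1} ∩ ({p | IsMsg p.1}
            ∩ ({p | IsAct p.2} ∩ {p | RBR μ₀ uR p.1 p.2})) := by
        ext p; simp only [PersProfile, Set.mem_setOf_eq, Set.mem_inter_iff, and_assoc]
      rw [this]
      exact isClosed_partitional.inter (isClosed_isMsg.inter
        (isClosed_isAct.inter (isClosed_RBR μ₀ uR)))
    · exact fun p hp => ⟨hp.2.1, hp.2.2.1⟩
  have hne : {p : (Ω → M → ℝ) × (M → A → ℝ) |
      Partitional p.1 ∧ PersProfile μ₀ uR p.1 p.2}.Nonempty := by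
    obtain ⟨σ, ρ, hpart, h⟩ := exists_babbling (M := M) hμ v uR
    exact ⟨(σ, ρ), hpart, h.1, h.2.1, h.2.2.2⟩
  have himg := (hK.image (continuous_U_pair μ₀ (fun p => v p.1))).sSup_mem
    (hne.image _)
  have hrw : partPersPayoff (M := M) μ₀ (fun p => v p.1) uR
      = sSup ((fun p : (Ω → M → ℝ) × (M → A → ℝ) => U μ₀ (fun p => v p.1) p.1 p.2) ''
        {p | Partitional p.1 ∧ PersProfile μ₀ uR p.1 p.2}) := by
    unfold partPersPayoff
    congr 1
    ext x
    constructor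
    · rintro ⟨σ, ρ, h1, h2, rfl⟩; exact ⟨(σ, ρ), ⟨h1, h2⟩, rfl⟩
    · rintro ⟨⟨σ, ρ⟩, ⟨h1, h2⟩, rfl⟩; exact ⟨σ, ρ, h1, h2, rfl⟩
  rw [hrw]
  obtain ⟨⟨σ, ρ⟩, h, hval⟩ := himg
  exact ⟨σ, ρ, h.1, h.2, hval⟩

end Aux4

section Aux5
set_option linter.unusedSectionVars false
open scoped Classical
variable {Ω A M : Type} [Fintype Ω] [Fintype A] [Fintype M]
variable {μ₀ : Ω → ℝ} {v : A → ℝ} {uR : A × Ω → ℝ}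

lemma dist_support_nonempty {X : Type} [Fintype X] {f : X → ℝ} (hf : IsDist f) :
    ∃ x, 0 < f x := by
  by_contra hcon
  push_neg at hcon
  have : ∑ x, f x = 0 :=
    le_antisymm (Finset.sum_nonpos fun x _ => hcon x) (Finset.sum_nonneg fun x _ => hf.1 x)
  rw [hf.2] at this
  norm_num at this

lemma offpath_zero {σ : Ω → M → ℝ} (hσ : IsMsg σ) {m : M} (h : ¬ OnPath σ m) (ω : Ω) :
    σ ω m = 0 := by
  rw [OnPath] at h
  push_neg at h
  exact le_antisymm (h ω) ((hσ ω).1 m)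

lemma Rsc_offpath {σ : Ω → M → ℝ} {m : M} (h : ∀ ω, σ ω m = 0) (a : A) :
    Rsc μ₀ uR σ a m = 0 := by
  unfold Rsc
  exact Finset.sum_eq_zero fun ω _ => by rw [h ω]; ring

lemma Rsc_total {σ : Ω → M → ℝ} (hσ : IsMsg σ) (a : A) :
    ∑ m, Rsc μ₀ uR σ a m = ∑ ω, μ₀ ω * uR (a, ω) := by
  unfold Rsc
  rw [Finset.sum_comm]
  refine Finset.sum_congr rfl fun ω _ => ?_
  have : ∀ m, μ₀ ω * σ ω m * uR (a, ω) = σ ω m * (μ₀ ω * uR (a, ω)) := fun m => by ring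
  rw [Finset.sum_congr rfl fun m _ => this m, sum_dist_mul (hσ ω)]

/-- Pooling on any best response to the prior is a partitional persuasion profile. -/
lemma pooling_profile [Nonempty M] (μ₀ : Ω → ℝ) (hμ : IsPrior μ₀) (v : A → ℝ)
    (uR : A × Ω → ℝ) (b : A)
    (hbr : ∀ a, ∑ ω, μ₀ ω * uR (a, ω) ≤ ∑ ω, μ₀ ω * uR (b, ω)) :
    ∃ (σ : Ω → M → ℝ) (ρ : M → A → ℝ), Partitional σ ∧ PersProfile μ₀ uR σ ρ ∧
      U μ₀ (fun p => v p.1) σ ρ = v b := by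
  classical
  obtain ⟨m₀⟩ := ‹Nonempty M›
  refine ⟨fun _ => dl m₀, fun _ => dl b, fun ω => ⟨m₀, by simp [dl]⟩,
    ⟨fun ω => dl_isDist m₀, fun m => dl_isDist b, ?_⟩, ?_⟩
  · refine RBR_of_choice μ₀ uR _ (fun _ => b) (fun m a => ?_)
    by_cases h : m = m₀ <;> simp [Rsc, dl, h, hbr a]
  · exact US_const μ₀ hμ.2 v (fun ω => dl_isDist m₀) (fun m => Vl_dl v (fun _ => b) m)

/-- Main Lemma A: if the optimal cheap-talk payoff equals the persuasion payoff
(and `v` is injective), then pooling on a prior best response attains the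
persuasion payoff, so the partitional persuasion payoff also equals it. -/
lemma lemA [Nonempty A] [Nonempty M] [Nonempty Ω] (hb : Bnd μ₀ v uR)
    (hv : Function.Injective v)
    (hct : ctPayoff (M := M) μ₀ (fun p => v p.1) uR
      = persPayoff (M := M) μ₀ (fun p => v p.1) uR) :
    partPersPayoff (M := M) μ₀ (fun p => v p.1) uR
      = persPayoff (M := M) μ₀ (fun p => v p.1) uR := by
  classical
  obtain ⟨σ, ρ, heq, hval⟩ := exists_ct_max (M := M) (v := v) (uR := uR) hb.prior
  obtain ⟨hσ, hρ, hS, hR⟩ := heq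
  -- the best supported action after each message
  have hsupp : ∀ m, ∃ a, 0 < ρ m a ∧ ∀ a', 0 < ρ m a' → v a' ≤ v a := by
    intro m
    obtain ⟨a0, ha0⟩ := dist_support_nonempty (hρ m)
    obtain ⟨a, ha, hmax⟩ := Finset.exists_max_image (Finset.univ.filter fun a => 0 < ρ m a)
      v ⟨a0, by simp [ha0]⟩
    refine ⟨a, by simpa using (Finset.mem_filter.1 ha).2, fun a' ha' => ?_⟩
    exact hmax a' (by simp [ha'])
  choose c hc1 hc2 using hsupp
  -- c m is a receiver best response after every message
  have hcmax : ∀ m a, Rsc μ₀ uR σ a m ≤ Rsc μ₀ uR σ (c m) m := by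
    intro m a
    by_cases h : OnPath σ m
    · exact RBR_support μ₀ uR hρ hR (hc1 m) a
    · rw [Rsc_offpath (offpath_zero hσ h), Rsc_offpath (offpath_zero hσ h)]
  -- the pure profile (σ, dl ∘ c) is a persuasion profile
  have hpers : PersProfile μ₀ uR σ (fun m => dl (c m)) :=
    ⟨hσ, fun m => dl_isDist (c m), RBR_of_choice μ₀ uR σ c hcmax⟩
  have hVle : ∀ m, Vl v ρ m ≤ v (c m) := by
    intro m
    unfold Vl
    calc ∑ a, ρ m a * v a ≤ ∑ a, ρ m a * v (c m) := by
          refine Finset.sum_le_sum fun a _ => ?_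
          rcases lt_or_eq_of_le ((hρ m).1 a) with hpos | hzero
          · exact mul_le_mul_of_nonneg_left (hc2 m a hpos) hpos.le
          · rw [← hzero]; ring_nf; exact le_refl 0
      _ = v (c m) := sum_dist_mul (hρ m) _
  have hUle : U μ₀ (fun p => v p.1) σ ρ ≤ U μ₀ (fun p => v p.1) σ (fun m => dl (c m)) := by
    rw [US_eq, US_eq]
    refine Finset.sum_le_sum fun ω _ => mul_le_mul_of_nonneg_left ?_ (hb.prior.1 ω).le
    refine Finset.sum_le_sum fun m _ => ?_
    rw [Vl_dl]
    exact mul_le_mul_of_nonneg_left (hVle m) ((hσ ω).1 m)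
  have hUeq : U μ₀ (fun p => v p.1) σ (fun m => dl (c m)) = U μ₀ (fun p => v p.1) σ ρ := by
    have h1 : U μ₀ (fun p => v p.1) σ (fun m => dl (c m))
        ≤ persPayoff (M := M) μ₀ (fun p => v p.1) uR := le_persPayoff hb hpers
    rw [hval, hct] at hUle ⊢
    linarith
  -- on-path messages: Vl equals v (c m)
  have hpt : ∀ ω m, 0 < σ ω m → Vl v ρ m = v (c m) := by
    by_contra hcon
    push_neg at hcon
    obtain ⟨ω0, m0, hpos0, hne0⟩ := hcon
    have hlt : Vl v ρ m0 < v (c m0) := lt_of_le_of_ne (hVle m0) hne0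
    have : U μ₀ (fun p => v p.1) σ ρ < U μ₀ (fun p => v p.1) σ (fun m => dl (c m)) := by
      rw [US_eq, US_eq]
      refine Finset.sum_lt_sum (fun ω _ => mul_le_mul_of_nonneg_left
        (Finset.sum_le_sum fun m _ => by
          rw [Vl_dl]; exact mul_le_mul_of_nonneg_left (hVle m) ((hσ ω).1 m))
        (hb.prior.1 ω).le) ⟨ω0, Finset.mem_univ ω0, ?_⟩
      refine mul_lt_mul_of_pos_left ?_ (hb.prior.1 ω0)
      refine Finset.sum_lt_sum (fun m _ => by
        rw [Vl_dl]; exact mul_le_mul_of_nonneg_left (hVle m) ((hσ ω0).1 m))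
        ⟨m0, Finset.mem_univ m0, ?_⟩
      rw [Vl_dl]
      exact mul_lt_mul_of_pos_left hlt hpos0
    rw [hUeq] at this
    exact lt_irrefl _ this
  -- all on-path messages have the same (sender-best) action
  obtain ⟨m₁, ω₁, hm₁⟩ : ∃ m ω, 0 < σ ω m := by
    obtain ⟨ω⟩ := ‹Nonempty Ω›
    obtain ⟨m, hm⟩ := dist_support_nonempty (hσ ω)
    exact ⟨m, ω, hm⟩
  have hsame : ∀ m ω, 0 < σ ω m → c m = c m₁ := by
    intro m ω hpos
    have h1 : Vl v ρ m₁ ≤ Vl v ρ m := SBR_support μ₀ hb.prior.1 v hσ hS hpos m₁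
    have h2 : Vl v ρ m ≤ Vl v ρ m₁ := SBR_support μ₀ hb.prior.1 v hσ hS hm₁ m
    have : v (c m) = v (c m₁) := by
      rw [← hpt ω m hpos, ← hpt ω₁ m₁ hm₁]; linarith
    exact hv this
  -- c m₁ is a best response to the prior
  have hprior : ∀ a, ∑ ω, μ₀ ω * uR (a, ω) ≤ ∑ ω, μ₀ ω * uR (c m₁, ω) := by
    intro a
    rw [← Rsc_total hσ a, ← Rsc_total hσ (c m₁)]
    refine Finset.sum_le_sum fun m _ => ?_
    by_cases h : OnPath σ m
    · obtain ⟨ω, hω⟩ := h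
      rw [← hsame m ω hω]
      exact hcmax m a
    · rw [Rsc_offpath (offpath_zero hσ h), Rsc_offpath (offpath_zero hσ h)]
  -- the equilibrium payoff equals v (c m₁)
  have hxval : U μ₀ (fun p => v p.1) σ ρ = v (c m₁) := by
    rw [US_eq]
    have : ∀ ω, μ₀ ω * ∑ m, σ ω m * Vl v ρ m = μ₀ ω * v (c m₁) := by
      intro ω
      congr 1
      have : ∀ m, σ ω m * Vl v ρ m = σ ω m * v (c m₁) := by
        intro m
        rcases lt_or_eq_of_le ((hσ ω).1 m) with hpos | hzero
        · rw [hpt ω m hpos, hsame m ω hpos]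
        · rw [← hzero]; ring
      rw [Finset.sum_congr rfl fun m _ => this m, sum_dist_mul (hσ ω)]
    rw [Finset.sum_congr rfl fun ω _ => this ω, ← Finset.sum_mul, hb.prior.2, one_mul]
  -- pooling attains the persuasion payoff
  obtain ⟨σ₂, ρ₂, hpart₂, hpers₂, hval₂⟩ :=
    pooling_profile (M := M) μ₀ hb.prior v uR (c m₁) hprior
  refine le_antisymm (partPers_le_pers hb) ?_
  calc persPayoff (M := M) μ₀ (fun p => v p.1) uR
      = v (c m₁) := by rw [← hct, ← hval, hxval]
    _ = U μ₀ (fun p => v p.1) σ₂ ρ₂ := hval₂.symm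
    _ ≤ partPersPayoff (M := M) μ₀ (fun p => v p.1) uR := le_partPersPayoff hb hpart₂ hpers₂

end Aux5

section Aux6
set_option linter.unusedSectionVars false
open scoped Classical
variable {Ω A M : Type} [Fintype Ω] [Fintype A] [Fintype M]
variable {μ₀ : Ω → ℝ} {v : A → ℝ} {uR : A × Ω → ℝ}

lemma dl_self {X : Type} (x : X) : dl x x = 1 := by simp [dl]

lemma dl_ne {X : Type} {x y : X} (h : y ≠ x) : dl x y = 0 := by simp [dl, h]

lemma sum_dl_mul {X : Type} [Fintype X] (x₀ : X) (f : X → ℝ) :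
    ∑ x, dl x₀ x * f x = f x₀ := by
  classical
  simp [dl, ite_mul]

lemma sum_cdl_mul {X : Type} [Fintype X] (cc : ℝ) (x₀ : X) (f : X → ℝ) :
    ∑ x, cc * dl x₀ x * f x = cc * f x₀ := by
  classical
  have : ∀ x, cc * dl x₀ x * f x = cc * (dl x₀ x * f x) := fun x => by ring
  rw [Finset.sum_congr rfl fun x _ => this x, ← Finset.mul_sum, sum_dl_mul]

lemma dist_eq_one_of_support {X : Type} [Fintype X] {f : X → ℝ} (hf : IsDist f) (x₀ : X)
    (h : ∀ x, x ≠ x₀ → f x = 0) : f x₀ = 1 := by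
  classical
  have := hf.2
  rwa [Finset.sum_eq_single x₀ (fun b _ hb => h b hb)
    (fun hx => absurd (Finset.mem_univ x₀) hx)] at this

/-- If two cells of a partitional profile have different sender values, the profile can be
strictly improved upon by a (randomized) persuasion profile using a fresh message. -/
lemma improve_profile [Nonempty A] (hb : Bnd μ₀ v uR)
    (σ : Ω → M → ℝ) (t : Ω → M) (hσval : ∀ ω m, σ ω m = dl (t ω) m)
    (c : M → A)
    (hcmax : ∀ m, (∃ ω, t ω = m) → ∀ b, Rsc μ₀ uR σ b m ≤ Rsc μ₀ uR σ (c m) m)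
    (hcstrict : ∀ m, (∃ ω, t ω = m) → ∀ b, b ≠ c m →
      Rsc μ₀ uR σ b m < Rsc μ₀ uR σ (c m) m)
    (ω1 ω2 : Ω) (hlt : v (c (t ω2)) < v (c (t ω1)))
    (m3 : M) (hm3 : ∀ ω, t ω ≠ m3) :
    ∃ (σ' : Ω → M → ℝ) (ρ' : M → A → ℝ), PersProfile μ₀ uR σ' ρ' ∧
      ∑ ω, μ₀ ω * v (c (t ω)) < U μ₀ (fun p => v p.1) σ' ρ' := by
  classical
  set m1 := t ω1 with hm1def
  set m2 := t ω2 with hm2def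
  have hon1 : ∃ ω, t ω = m1 := ⟨ω1, hm1def.symm⟩
  have hon2 : ∃ ω, t ω = m2 := ⟨ω2, hm2def.symm⟩
  have hm12 : m1 ≠ m2 := by
    intro h
    rw [h] at hlt
    exact lt_irrefl _ hlt
  have ha12 : c m2 ≠ c m1 := by
    intro h
    rw [h] at hlt
    exact lt_irrefl _ hlt
  have hm31 : m1 ≠ m3 := hm1def ▸ hm3 ω1
  have hm32 : m2 ≠ m3 := hm2def ▸ hm3 ω2
  -- the margin d
  obtain ⟨d, hdpos, hdle⟩ : ∃ d : ℝ, 0 < d ∧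
      ∀ b, b ≠ c m1 → d ≤ Rsc μ₀ uR σ (c m1) m1 - Rsc μ₀ uR σ b m1 := by
    have hTne : (Finset.univ.erase (c m1)).Nonempty :=
      ⟨c m2, Finset.mem_erase.2 ⟨ha12, Finset.mem_univ _⟩⟩
    have himgne : ((Finset.univ.erase (c m1)).image
        (fun b => Rsc μ₀ uR σ (c m1) m1 - Rsc μ₀ uR σ b m1)).Nonempty := hTne.image _
    refine ⟨((Finset.univ.erase (c m1)).image
        (fun b => Rsc μ₀ uR σ (c m1) m1 - Rsc μ₀ uR σ b m1)).min' himgne, ?_, ?_⟩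
    · obtain ⟨b, hbT, hbd⟩ := Finset.mem_image.1 (Finset.min'_mem _ himgne)
      rw [← hbd]
      have := hcstrict m1 hon1 b (Finset.mem_erase.1 hbT).1
      linarith
    · intro b hb
      exact Finset.min'_le _ _
        (Finset.mem_image.2 ⟨b, Finset.mem_erase.2 ⟨hb, Finset.mem_univ b⟩, rfl⟩)
  -- the bound E
  obtain ⟨E, hE0, hEle⟩ : ∃ E : ℝ, 0 ≤ E ∧
      ∀ b, |Rsc μ₀ uR σ (c m1) m2 - Rsc μ₀ uR σ b m2| ≤ E := by
    have himg2ne : (Finset.univ.image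
        (fun b : A => |Rsc μ₀ uR σ (c m1) m2 - Rsc μ₀ uR σ b m2|)).Nonempty :=
      Finset.univ_nonempty.image _
    refine ⟨(Finset.univ.image
        (fun b : A => |Rsc μ₀ uR σ (c m1) m2 - Rsc μ₀ uR σ b m2|)).max' himg2ne, ?_, ?_⟩
    · obtain ⟨b, -, hbeq⟩ := Finset.mem_image.1 (Finset.max'_mem _ himg2ne)
      rw [← hbeq]
      exact abs_nonneg _
    · intro b
      refine Finset.le_max' _ _ ?_
      exact Finset.mem_image.2 ⟨b, Finset.mem_univ b, rfl⟩
  set β := min (d / (2 * (E + 1))) (1/2 : ℝ) with hβ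
  have hβpos : 0 < β := lt_min (div_pos hdpos (by linarith)) (by norm_num)
  have hβhalf : β ≤ 1/2 := min_le_right _ _
  have hβd : β ≤ d / (2 * (E + 1)) := min_le_left _ _
  -- the key mixed-score inequality
  have hkey : ∀ b, (1/2) * Rsc μ₀ uR σ b m1 + β * Rsc μ₀ uR σ b m2
      ≤ (1/2) * Rsc μ₀ uR σ (c m1) m1 + β * Rsc μ₀ uR σ (c m1) m2 := by
    intro b
    by_cases hbb : b = c m1
    · rw [hbb]
    · have h1 : d ≤ Rsc μ₀ uR σ (c m1) m1 - Rsc μ₀ uR σ b m1 := hdle b hbb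
      have h2 : Rsc μ₀ uR σ b m2 - Rsc μ₀ uR σ (c m1) m2
          ≤ |Rsc μ₀ uR σ (c m1) m2 - Rsc μ₀ uR σ b m2| := by
        rw [abs_sub_comm]
        exact le_abs_self _
      have h3 : β * (Rsc μ₀ uR σ b m2 - Rsc μ₀ uR σ (c m1) m2)
          ≤ β * |Rsc μ₀ uR σ (c m1) m2 - Rsc μ₀ uR σ b m2| :=
        mul_le_mul_of_nonneg_left h2 hβpos.le
      have h4 : β * |Rsc μ₀ uR σ (c m1) m2 - Rsc μ₀ uR σ b m2|
          ≤ (d / (2 * (E + 1))) * E :=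
        mul_le_mul hβd (hEle b) (abs_nonneg _) (by positivity)
      have h5 : (d / (2 * (E + 1))) * E ≤ d / 2 := by
        rw [div_mul_eq_mul_div, div_le_div_iff₀ (by linarith) (by norm_num)]
        nlinarith
      linarith
  -- the perturbed messaging strategy
  set σ' : Ω → M → ℝ := fun ω m =>
    if t ω = m1 then (1/2) * dl m1 m + (1/2) * dl m3 m
    else if t ω = m2 then (1 - β) * dl m2 m + β * dl m3 m
    else dl (t ω) m with hσ'def
  have hσ'val : ∀ ω m, σ' ω m =
      if t ω = m1 then (1/2) * dl m1 m + (1/2) * dl m3 m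
      else if t ω = m2 then (1 - β) * dl m2 m + β * dl m3 m
      else dl (t ω) m := fun ω m => rfl
  have hIsMsg' : IsMsg σ' := by
    intro ω
    constructor
    · intro m
      rw [hσ'val]
      by_cases h1 : t ω = m1
      · rw [if_pos h1]
        have hh1 := (dl_isDist (X := M) m1).1 m
        have hh2 := (dl_isDist (X := M) m3).1 m
        positivity
      · rw [if_neg h1]
        by_cases h2 : t ω = m2
        · rw [if_pos h2]
          have hh1 := (dl_isDist (X := M) m2).1 m
          have hh2 := (dl_isDist (X := M) m3).1 m
          have hh3 : (0:ℝ) ≤ 1 - β := by linarith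
          positivity
        · rw [if_neg h2]
          exact (dl_isDist (t ω)).1 m
    · by_cases h1 : t ω = m1
      · have hrow : ∀ m, σ' ω m = (1/2) * dl m1 m + (1/2) * dl m3 m :=
          fun m => by rw [hσ'val, if_pos h1]
        rw [Finset.sum_congr rfl fun m _ => hrow m, Finset.sum_add_distrib,
          ← Finset.mul_sum, ← Finset.mul_sum, (dl_isDist m1).2, (dl_isDist m3).2]
        norm_num
      · by_cases h2 : t ω = m2
        · have hrow : ∀ m, σ' ω m = (1 - β) * dl m2 m + β * dl m3 m :=
            fun m => by rw [hσ'val, if_neg h1, if_pos h2]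
          rw [Finset.sum_congr rfl fun m _ => hrow m, Finset.sum_add_distrib,
            ← Finset.mul_sum, ← Finset.mul_sum, (dl_isDist m2).2, (dl_isDist m3).2]
          ring
        · have hrow : ∀ m, σ' ω m = dl (t ω) m :=
            fun m => by rw [hσ'val, if_neg h1, if_neg h2]
          rw [Finset.sum_congr rfl fun m _ => hrow m]
          exact (dl_isDist (t ω)).2
  -- the scaling coefficient for old messages
  set kap : M → ℝ := fun m => if m = m1 then (1/2 : ℝ) else if m = m2 then 1 - β else 1
    with hkapdef
  have hkap0 : ∀ m, 0 ≤ kap m := by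
    intro m
    simp only [hkapdef]
    split_ifs <;> linarith
  have hscale : ∀ m, m ≠ m3 → ∀ ω, σ' ω m = kap m * σ ω m := by
    intro m hm ω
    rw [hσ'val, hσval]
    by_cases h1 : t ω = m1
    · rw [if_pos h1, h1, dl_ne hm]
      by_cases hmm1 : m = m1
      · have hk : kap m = 1/2 := by simp only [hkapdef]; rw [if_pos hmm1]
        rw [hk, hmm1, dl_self]
        norm_num
      · have hd1 : dl m1 m = 0 := dl_ne hmm1
        rw [hd1]
        ring
    · rw [if_neg h1]
      by_cases h2 : t ω = m2
      · rw [if_pos h2, h2, dl_ne hm]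
        by_cases hmm2 : m = m2
        · have hmm1 : ¬ m = m1 := by rw [hmm2]; exact fun h => hm12 h.symm
          have hk : kap m = 1 - β := by
            simp only [hkapdef]; rw [if_neg hmm1, if_pos hmm2]
          rw [hk, hmm2, dl_self]
          ring
        · rw [dl_ne hmm2]
          ring
      · rw [if_neg h2]
        by_cases hmt : m = t ω
        · have hmm1 : ¬ m = m1 := by rw [hmt]; exact h1
          have hmm2 : ¬ m = m2 := by rw [hmt]; exact h2
          have hk : kap m = 1 := by
            simp only [hkapdef]; rw [if_neg hmm1, if_neg hmm2]
          rw [hk, hmt, dl_self]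
          ring
        · rw [dl_ne hmt]
          ring
  have hRsc_scale : ∀ m, m ≠ m3 → ∀ a, Rsc μ₀ uR σ' a m = kap m * Rsc μ₀ uR σ a m := by
    intro m hm a
    unfold Rsc
    rw [Finset.mul_sum]
    refine Finset.sum_congr rfl fun ω _ => ?_
    rw [hscale m hm ω]
    ring
  have hm3row : ∀ ω, σ' ω m3 = (1/2) * σ ω m1 + β * σ ω m2 := by
    intro ω
    rw [hσ'val, hσval, hσval]
    by_cases h1 : t ω = m1
    · rw [if_pos h1, h1, dl_ne (Ne.symm hm31), dl_self, dl_self, dl_ne (Ne.symm hm12)]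
      ring
    · rw [if_neg h1]
      by_cases h2 : t ω = m2
      · rw [if_pos h2, h2, dl_ne (Ne.symm hm32), dl_self, dl_self, dl_ne hm12]
        ring
      · rw [if_neg h2, dl_ne (fun h => hm3 ω h.symm), dl_ne (fun h => h1 h.symm),
          dl_ne (fun h => h2 h.symm)]
        ring
  have hRsc3 : ∀ a, Rsc μ₀ uR σ' a m3
      = (1/2) * Rsc μ₀ uR σ a m1 + β * Rsc μ₀ uR σ a m2 := by
    intro a
    unfold Rsc
    rw [Finset.mul_sum, Finset.mul_sum, ← Finset.sum_add_distrib]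
    refine Finset.sum_congr rfl fun ω _ => ?_
    rw [hm3row ω]
    ring
  -- the response to the perturbed strategy
  set c3 : M → A := fun m => if m = m3 then c m1 else if ∃ ω, t ω = m then c m else c m1
    with hc3def
  have hc3m3 : c3 m3 = c m1 := by simp [hc3def]
  have hc3on : ∀ m, m ≠ m3 → (∃ ω, t ω = m) → c3 m = c m := by
    intro m hm hon
    simp [hc3def, hm, hon]
  have hc3max : ∀ m b, Rsc μ₀ uR σ' b m ≤ Rsc μ₀ uR σ' (c3 m) m := by
    intro m b
    by_cases hm : m = m3
    · rw [hm, hc3m3, hRsc3, hRsc3]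
      exact hkey b
    · rw [hRsc_scale m hm, hRsc_scale m hm]
      refine mul_le_mul_of_nonneg_left ?_ (hkap0 m)
      by_cases hon : ∃ ω, t ω = m
      · rw [hc3on m hm hon]
        exact hcmax m hon b
      · have hz : ∀ ω, σ ω m = 0 := by
          intro ω
          rw [hσval, dl_ne (fun h => hon ⟨ω, h.symm⟩)]
        rw [Rsc_offpath hz, Rsc_offpath hz]
  have hpers' : PersProfile μ₀ uR σ' (fun m => dl (c3 m)) :=
    ⟨hIsMsg', fun m => dl_isDist (c3 m), RBR_of_choice μ₀ uR σ' c3 hc3max⟩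
  -- payoff comparison
  have hc3m1 : c3 m1 = c m1 := hc3on m1 hm31 hon1
  have hc3m2 : c3 m2 = c m2 := hc3on m2 hm32 hon2
  have hinner : ∀ ω, ∑ m, σ' ω m * Vl v (fun m' => dl (c3 m')) m
      = if t ω = m2 then (1 - β) * v (c m2) + β * v (c m1) else v (c (t ω)) := by
    intro ω
    have hVlv : ∀ m, Vl v (fun m' => dl (c3 m')) m = v (c3 m) := fun m => Vl_dl v c3 m
    by_cases h1 : t ω = m1
    · rw [if_neg (by rw [h1]; exact hm12), h1]
      have hrow : ∀ m, σ' ω m * Vl v (fun m' => dl (c3 m')) m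
          = (1/2) * dl m1 m * v (c3 m) + (1/2) * dl m3 m * v (c3 m) := by
        intro m
        rw [hσ'val, if_pos h1, hVlv]
        ring
      rw [Finset.sum_congr rfl fun m _ => hrow m, Finset.sum_add_distrib,
        sum_cdl_mul, sum_cdl_mul, hc3m1, hc3m3]
      ring
    · by_cases h2 : t ω = m2
      · rw [if_pos h2]
        have hrow : ∀ m, σ' ω m * Vl v (fun m' => dl (c3 m')) m
            = (1 - β) * dl m2 m * v (c3 m) + β * dl m3 m * v (c3 m) := by
          intro m
          rw [hσ'val, if_neg h1, if_pos h2, hVlv]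
          ring
        rw [Finset.sum_congr rfl fun m _ => hrow m, Finset.sum_add_distrib,
          sum_cdl_mul, sum_cdl_mul, hc3m2, hc3m3]
      · rw [if_neg h2]
        have hrow : ∀ m, σ' ω m * Vl v (fun m' => dl (c3 m')) m
            = dl (t ω) m * v (c3 m) := by
          intro m
          rw [hσ'val, if_neg h1, if_neg h2, hVlv]
        rw [Finset.sum_congr rfl fun m _ => hrow m, sum_dl_mul,
          hc3on (t ω) (hm3 ω) ⟨ω, rfl⟩]
  refine ⟨σ', fun m => dl (c3 m), hpers', ?_⟩
  have hUnew : U μ₀ (fun p => v p.1) σ' (fun m => dl (c3 m))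
      = ∑ ω, μ₀ ω * (if t ω = m2 then (1 - β) * v (c m2) + β * v (c m1)
          else v (c (t ω))) := by
    rw [US_eq]
    refine Finset.sum_congr rfl fun ω _ => ?_
    rw [hinner ω]
  rw [hUnew]
  refine Finset.sum_lt_sum (fun ω _ => ?_) ⟨ω2, Finset.mem_univ ω2, ?_⟩
  · refine mul_le_mul_of_nonneg_left ?_ (hb.prior.1 ω).le
    by_cases h2 : t ω = m2
    · rw [if_pos h2, h2]
      nlinarith [hβpos, hlt]
    · rw [if_neg h2]
  · refine mul_lt_mul_of_pos_left ?_ (hb.prior.1 ω2)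
    rw [if_pos hm2def.symm, ← hm2def]
    nlinarith [hβpos, hlt]

/-- Main Lemma B: if an optimal partitional persuasion profile attains the persuasion
payoff (and PUR holds), then cheap talk attains the persuasion payoff. -/
lemma lemB [Nonempty A] [Nonempty M] [Nonempty Ω] (hb : Bnd μ₀ v uR)
    (hpur : PUR μ₀ uR) (hcard : Fintype.card Ω < Fintype.card M)
    (hpp : partPersPayoff (M := M) μ₀ (fun p => v p.1) uR
      = persPayoff (M := M) μ₀ (fun p => v p.1) uR) :
    ctPayoff (M := M) μ₀ (fun p => v p.1) uR
      = persPayoff (M := M) μ₀ (fun p => v p.1) uR := by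
  classical
  obtain ⟨σ, ρ, hpart, hpers, hval⟩ := exists_partPers_max (M := M) (v := v) (uR := uR) hb.prior
  obtain ⟨hσ, hρ, hR⟩ := hpers
  choose t ht using hpart
  -- structure of the partitional strategy
  have hzero : ∀ ω m, m ≠ t ω → σ ω m = 0 := by
    intro ω m hm
    have h1 : σ ω (t ω) + ∑ m' ∈ Finset.univ.erase (t ω), σ ω m' = ∑ m', σ ω m' :=
      Finset.add_sum_erase Finset.univ (σ ω) (Finset.mem_univ (t ω))
    rw [(hσ ω).2, ht ω] at h1
    have h2 : ∑ m' ∈ Finset.univ.erase (t ω), σ ω m' = 0 := by linarith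
    have h3 := (Finset.sum_eq_zero_iff_of_nonneg
      (fun m' _ => (hσ ω).1 m')).1 h2
    exact h3 m (Finset.mem_erase.2 ⟨hm, Finset.mem_univ m⟩)
  have hσval : ∀ ω m, σ ω m = dl (t ω) m := by
    intro ω m
    unfold dl
    by_cases h : m = t ω
    · rw [if_pos h, h, ht ω]
    · rw [if_neg h, hzero ω m h]
  -- receiver scores as cell sums
  have hRsc : ∀ a m, Rsc μ₀ uR σ a m
      = ∑ ω ∈ Finset.univ.filter (fun ω => t ω = m), μ₀ ω * uR (a, ω) := by
    intro a m
    unfold Rsc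
    rw [← Finset.sum_filter_add_sum_filter_not Finset.univ (fun ω => t ω = m)]
    have h1 : ∑ ω ∈ Finset.univ.filter (fun ω => ¬ t ω = m), μ₀ ω * σ ω m * uR (a, ω) = 0 := by
      refine Finset.sum_eq_zero fun ω hω => ?_
      rw [hzero ω m (fun h => (Finset.mem_filter.1 hω).2 h.symm)]
      ring
    have h2 : ∀ ω ∈ Finset.univ.filter (fun ω => t ω = m),
        μ₀ ω * σ ω m * uR (a, ω) = μ₀ ω * uR (a, ω) := by
      intro ω hω
      rw [← (Finset.mem_filter.1 hω).2, ht ω]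
      ring
    rw [h1, add_zero, Finset.sum_congr rfl h2]
  -- the unique receiver best response to each on-path cell
  have hbest : ∀ m : M, ∃ a : A, (∃ ω, t ω = m) →
      ((∀ b, Rsc μ₀ uR σ b m ≤ Rsc μ₀ uR σ a m) ∧
        ∀ b, b ≠ a → Rsc μ₀ uR σ b m < Rsc μ₀ uR σ a m) := by
    intro m
    by_cases h : ∃ ω, t ω = m
    · obtain ⟨ω₀, hω₀⟩ := h
      have hSne : (Finset.univ.filter (fun ω => t ω = m)).Nonempty :=
        ⟨ω₀, Finset.mem_filter.2 ⟨Finset.mem_univ ω₀, hω₀⟩⟩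
      obtain ⟨a, ha, hu⟩ := hpur _ hSne
      have hw : ∀ b, Rsc μ₀ uR σ b m ≤ Rsc μ₀ uR σ a m := by
        intro b; rw [hRsc, hRsc]; exact ha b
      refine ⟨a, fun _ => ⟨hw, fun b hb => ?_⟩⟩
      rcases lt_or_eq_of_le (hw b) with hlt | heq
      · exact hlt
      · exfalso
        refine hb (hu b ?_)
        intro cc
        have h5 := hw cc
        rw [hRsc, hRsc] at h5
        have h6 : Rsc μ₀ uR σ b m = Rsc μ₀ uR σ a m := heq
        rw [hRsc, hRsc] at h6
        rw [← h6] at h5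
        exact h5
    · exact ⟨Classical.arbitrary A, fun h' => absurd h' h⟩
  choose c hc using hbest
  -- on-path responses are pure
  have hρrow : ∀ m, (∃ ω, t ω = m) → ∀ a, a ≠ c m → ρ m a = 0 := by
    intro m hm a ha
    by_contra hcon
    have hpos : 0 < ρ m a := lt_of_le_of_ne ((hρ m).1 a) (Ne.symm hcon)
    have h1 := RBR_support μ₀ uR hρ hR hpos (c m)
    have h2 := (hc m hm).2 a ha
    linarith
  have hVl : ∀ m, (∃ ω, t ω = m) → Vl v ρ m = v (c m) := by
    intro m hm
    unfold Vl
    rw [Finset.sum_eq_single (c m) (fun b _ hb => by rw [hρrow m hm b hb]; ring)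
      (fun hx => absurd (Finset.mem_univ (c m)) hx)]
    rw [dist_eq_one_of_support (hρ m) (c m) (hρrow m hm), one_mul]
  have hinner : ∀ ω, ∑ m, σ ω m * Vl v ρ m = v (c (t ω)) := by
    intro ω
    rw [Finset.sum_congr rfl fun m _ => by rw [hσval ω m], sum_dl_mul]
    exact hVl (t ω) ⟨ω, rfl⟩
  have hxval : U μ₀ (fun p => v p.1) σ ρ = ∑ ω, μ₀ ω * v (c (t ω)) := by
    rw [US_eq]
    exact Finset.sum_congr rfl fun ω _ => by rw [hinner ω]
  by_cases hall : ∀ ω ω' : Ω, v (c (t ω)) = v (c (t ω'))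
  · -- all cells share the same sender value: the profile is IC, hence a CT equilibrium
    obtain ⟨ω₁⟩ := ‹Nonempty Ω›
    have hx : U μ₀ (fun p => v p.1) σ ρ = v (c (t ω₁)) := by
      rw [hxval, Finset.sum_congr rfl fun ω _ => by rw [hall ω ω₁], ← Finset.sum_mul,
        hb.prior.2, one_mul]
    set c2 : M → A := fun m => if ∃ ω, t ω = m then c m else c (t ω₁) with hc2
    have hVl2 : ∀ m, Vl v (fun m' => dl (c2 m')) m = v (c (t ω₁)) := by
      intro m
      rw [Vl_dl]
      by_cases h : ∃ ω, t ω = m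
      · obtain ⟨ω, hω⟩ := h
        have hcc : c2 m = c m := by simp only [hc2]; rw [if_pos ⟨ω, hω⟩]
        rw [hcc, ← hω]
        exact hall ω ω₁
      · have hcc : c2 m = c (t ω₁) := by simp only [hc2]; rw [if_neg h]
        rw [hcc]
    have hRBR2 : RBR μ₀ uR σ (fun m => dl (c2 m)) := by
      refine RBR_of_choice μ₀ uR σ c2 (fun m b => ?_)
      by_cases h : ∃ ω, t ω = m
      · have hcc : c2 m = c m := by simp only [hc2]; rw [if_pos h]
        rw [hcc]
        exact (hc m h).1 b
      · have hz : ∀ ω, σ ω m = 0 := fun ω => hzero ω m (fun he => h ⟨ω, he.symm⟩)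
        rw [Rsc_offpath hz, Rsc_offpath hz]
    have hcteq : CTEq μ₀ (fun p => v p.1) uR σ (fun m => dl (c2 m)) :=
      ⟨hσ, fun m => dl_isDist (c2 m), SBR_of_const μ₀ hb.prior.2 v hσ hVl2, hRBR2⟩
    have hUct : U μ₀ (fun p => v p.1) σ (fun m => dl (c2 m)) = v (c (t ω₁)) :=
      US_const μ₀ hb.prior.2 v hσ hVl2
    refine le_antisymm (ct_le_pers hb) ?_
    calc persPayoff (M := M) μ₀ (fun p => v p.1) uR
        = v (c (t ω₁)) := by rw [← hpp, ← hval, hx]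
      _ = U μ₀ (fun p => v p.1) σ (fun m => dl (c2 m)) := hUct.symm
      _ ≤ ctPayoff (M := M) μ₀ (fun p => v p.1) uR := le_ctPayoff hb hcteq
  · -- two cells with different sender values: contradiction with persuasion optimality
    exfalso
    push_neg at hall
    obtain ⟨ωa, ωb, hne⟩ := hall
    have hcontra : ∀ ω1 ω2 : Ω, v (c (t ω2)) < v (c (t ω1)) → False := by
      intro ω1 ω2 hlt2
      -- fresh message
      have himg : ∃ m3 : M, ∀ ω, t ω ≠ m3 := by
        by_contra hcon
        push_neg at hcon
        have heq : Finset.univ.image t = Finset.univ := by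
          refine Finset.eq_univ_iff_forall.2 fun m => ?_
          obtain ⟨ω, hω⟩ := hcon m
          exact Finset.mem_image.2 ⟨ω, Finset.mem_univ ω, hω⟩
        have h1 : (Finset.univ.image t).card ≤ Fintype.card Ω := by
          calc (Finset.univ.image t).card ≤ Finset.univ.card := Finset.card_image_le
            _ = Fintype.card Ω := Finset.card_univ
        rw [heq, Finset.card_univ] at h1
        omega
      obtain ⟨m3, hm3⟩ := himg
      obtain ⟨σ', ρ', hpers', hgt⟩ := improve_profile hb σ t hσval c
        (fun m h => (hc m h).1) (fun m h => (hc m h).2) ω1 ω2 hlt2 m3 hm3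
      have h1 := le_persPayoff hb hpers'
      rw [← hxval] at hgt
      rw [hval, hpp] at hgt
      linarith
    rcases lt_or_gt_of_ne hne with h | h
    · exact hcontra ωb ωa h
    · exact hcontra ωa ωb h

end Aux6

section Aux7
set_option linter.unusedSectionVars false
open scoped Classical
variable {Ω A : Type} [Fintype Ω] [Fintype A]

noncomputable instance haarProdInst :
    (volume : Measure ((A → ℝ) × (A × Ω → ℝ))).IsAddHaarMeasure :=
  Measure.prod.instIsAddHaarMeasure volume volume

lemma null_ker (L : ((A → ℝ) × (A × Ω → ℝ)) →ₗ[ℝ] ℝ) (x : (A → ℝ) × (A × Ω → ℝ))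
    (hx : L x ≠ 0) : volume {e : (A → ℝ) × (A × Ω → ℝ) | L e = 0} = 0 := by
  have h1 : {e : (A → ℝ) × (A × Ω → ℝ) | L e = 0} = ↑(LinearMap.ker L) := by
    ext e; simp [LinearMap.mem_ker]
  have h2 : LinearMap.ker L ≠ ⊤ := by
    intro h
    exact hx (LinearMap.mem_ker.1 (h.symm ▸ Submodule.mem_top))
  rw [h1]
  exact Measure.addHaar_submodule volume _ h2

/-- Difference of two sender payoffs, as a linear functional. -/
noncomputable def L1 (a b : A) : ((A → ℝ) × (A × Ω → ℝ)) →ₗ[ℝ] ℝ :=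
  ((LinearMap.proj a : (A → ℝ) →ₗ[ℝ] ℝ) - LinearMap.proj b).comp
    (LinearMap.fst ℝ (A → ℝ) (A × Ω → ℝ))

lemma L1_apply (a b : A) (e : (A → ℝ) × (A × Ω → ℝ)) : L1 a b e = e.1 a - e.1 b := rfl

/-- Difference of two receiver cell scores, as a linear functional. -/
noncomputable def L2 (μ₀ : Ω → ℝ) (S : Finset Ω) (a b : A) :
    ((A → ℝ) × (A × Ω → ℝ)) →ₗ[ℝ] ℝ :=
  (∑ ω ∈ S, μ₀ ω • ((LinearMap.proj (a, ω) : (A × Ω → ℝ) →ₗ[ℝ] ℝ)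
      - LinearMap.proj (b, ω))).comp (LinearMap.snd ℝ (A → ℝ) (A × Ω → ℝ))

lemma L2_apply (μ₀ : Ω → ℝ) (S : Finset Ω) (a b : A) (e : (A → ℝ) × (A × Ω → ℝ)) :
    L2 μ₀ S a b e = ∑ ω ∈ S, μ₀ ω * (e.2 (a, ω) - e.2 (b, ω)) := by
  unfold L2
  simp [LinearMap.sum_apply, LinearMap.proj_apply, smul_eq_mul]

lemma generic_null [Nonempty A] {μ₀ : Ω → ℝ} (hμ : IsPrior μ₀) :
    volume {e : (A → ℝ) × (A × Ω → ℝ) |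
      ¬ (Function.Injective e.1 ∧ PUR μ₀ e.2)} = 0 := by
  classical
  have hsub : {e : (A → ℝ) × (A × Ω → ℝ) | ¬ (Function.Injective e.1 ∧ PUR μ₀ e.2)}
      ⊆ (⋃ p : {p : A × A // p.1 ≠ p.2},
          {e : (A → ℝ) × (A × Ω → ℝ) | L1 p.1.1 p.1.2 e = 0})
        ∪ ⋃ q : {q : (Finset Ω) × A × A // q.1.Nonempty ∧ q.2.1 ≠ q.2.2},
          {e : (A → ℝ) × (A × Ω → ℝ) | L2 μ₀ q.1.1 q.1.2.1 q.1.2.2 e = 0} := by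
    intro e he
    simp only [Set.mem_setOf_eq, not_and_or] at he
    rcases he with h | h
    · left
      rw [Function.Injective] at h
      push_neg at h
      obtain ⟨a, b, hab, hne⟩ := h
      refine Set.mem_iUnion.2 ⟨⟨(a, b), hne⟩, ?_⟩
      rw [Set.mem_setOf_eq, L1_apply, hab, sub_self]
    · right
      rw [PUR] at h
      push_neg at h
      obtain ⟨S, hSne, hnu⟩ := h
      obtain ⟨amax, -, hamax⟩ := Finset.exists_max_image Finset.univ
        (fun a => ∑ ω ∈ S, μ₀ ω * e.2 (a, ω)) Finset.univ_nonempty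
      have hP : ∀ b : A, ∑ ω ∈ S, μ₀ ω * e.2 (b, ω) ≤ ∑ ω ∈ S, μ₀ ω * e.2 (amax, ω) :=
        fun b => hamax b (Finset.mem_univ b)
      have h2 : ¬ ∀ y, (∀ b, ∑ ω ∈ S, μ₀ ω * e.2 (b, ω)
          ≤ ∑ ω ∈ S, μ₀ ω * e.2 (y, ω)) → y = amax := by
        intro hy
        exact hnu ⟨amax, hP, hy⟩
      push_neg at h2
      obtain ⟨b, hPb, hbne⟩ := h2
      have heq : ∑ ω ∈ S, μ₀ ω * e.2 (amax, ω) = ∑ ω ∈ S, μ₀ ω * e.2 (b, ω) :=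
        le_antisymm (hPb amax) (hP b)
      refine Set.mem_iUnion.2 ⟨⟨(S, amax, b), hSne, Ne.symm hbne⟩, ?_⟩
      rw [Set.mem_setOf_eq, L2_apply]
      have h3 : ∑ ω ∈ S, μ₀ ω * (e.2 (amax, ω) - e.2 (b, ω))
          = ∑ ω ∈ S, μ₀ ω * e.2 (amax, ω) - ∑ ω ∈ S, μ₀ ω * e.2 (b, ω) := by
        rw [← Finset.sum_sub_distrib]
        exact Finset.sum_congr rfl fun ω _ => by ring
      rw [h3, heq, sub_self]
  refine measure_mono_null hsub (measure_union_null ?_ ?_)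
  · refine measure_iUnion_null fun p => ?_
    refine null_ker _ (dl p.1.1, 0) ?_
    rw [L1_apply]
    have hfst : ((dl p.1.1, (0 : A × Ω → ℝ))).1 = dl p.1.1 := rfl
    rw [hfst, dl_self, dl_ne (Ne.symm p.2)]
    norm_num
  · refine measure_iUnion_null fun q => ?_
    obtain ⟨ω₀, hω₀⟩ := q.2.1
    refine null_ker _ (0, dl (q.1.2.1, ω₀)) ?_
    rw [L2_apply]
    have hsnd : (((0 : A → ℝ), dl (q.1.2.1, ω₀))).2 = dl (q.1.2.1, ω₀) := rfl
    rw [hsnd]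
    have hcomp : ∀ ω ∈ q.1.1,
        μ₀ ω * (dl (q.1.2.1, ω₀) (q.1.2.1, ω) - dl (q.1.2.1, ω₀) (q.1.2.2, ω))
        = if ω = ω₀ then μ₀ ω else 0 := by
      intro ω _
      have hb2 : (q.1.2.2, ω) ≠ (q.1.2.1, ω₀) := fun h => q.2.2 ((Prod.ext_iff.1 h).1.symm)
      rw [dl_ne hb2]
      by_cases hω : ω = ω₀
      · rw [hω, dl_self, if_pos rfl]
        ring
      · rw [dl_ne (fun h => hω (Prod.ext_iff.1 h).2), if_neg hω]
        ring
    rw [Finset.sum_congr rfl hcomp, Finset.sum_ite_eq' q.1.1 ω₀ μ₀, if_pos hω₀]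
    exact ne_of_gt (hμ.1 ω₀)

end Aux7

/-- Theorem (Kamenica–Lin, Online Appendix): generically in transparent
environments, commitment is valuable iff committed Sender values randomization. -/
theorem transparent_commitment_iff_randomization
    (Ω A M : Type) [Fintype Ω] [Fintype A] [Fintype M]
    [Nonempty Ω] [Nonempty A]
    (hM : max (Fintype.card Ω) (Fintype.card A) < Fintype.card M)
    (μ₀ : Ω → ℝ) (hμ : IsPrior μ₀) :
    ∃ G : Set ((A → ℝ) × (A × Ω → ℝ)),
      G ⊆ TransCube Ω A ∧
      volume (TransCube Ω A \ G) = 0 ∧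
      ∀ e ∈ G,
        (ctPayoff (M := M) μ₀ (fun p => e.1 p.1) e.2 <
            persPayoff (M := M) μ₀ (fun p => e.1 p.1) e.2 ↔
          partPersPayoff (M := M) μ₀ (fun p => e.1 p.1) e.2 <
            persPayoff (M := M) μ₀ (fun p => e.1 p.1) e.2) := by
  classical
  have hMpos : 0 < Fintype.card M := lt_of_le_of_lt (Nat.zero_le _) hM
  haveI : Nonempty M := Fintype.card_pos_iff.1 hMpos
  refine ⟨{e | e ∈ TransCube Ω A ∧ Function.Injective e.1 ∧ PUR μ₀ e.2},
    fun e he => he.1, ?_, ?_⟩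
  · refine measure_mono_null (fun e he => ?_) (generic_null hμ)
    intro hcon
    exact he.2 ⟨he.1, hcon⟩
  · rintro e ⟨hcube, hinj, hpur⟩
    have hb : Bnd μ₀ e.1 e.2 := ⟨hμ, hcube.1, hcube.2⟩
    have hcard : Fintype.card Ω < Fintype.card M := lt_of_le_of_lt (le_max_left _ _) hM
    constructor
    · intro hlt
      refine lt_of_le_of_ne (partPers_le_pers hb) (fun heq => ?_)
      have h2 := lemB hb hpur hcard heq
      rw [h2] at hlt
      exact lt_irrefl _ hlt
    · intro hlt
      refine lt_of_le_of_ne (ct_le_pers hb) (fun heq => ?_)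
      have h2 := lemA hb hinj heq
      rw [h2] at hlt
      exact lt_irrefl _ hlt

end KL
end
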